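/- arXiv:1502.04000 — 11 statements merged into one kernel-verified Lean document; each statement's English description precedes it below -/
import Mathlib

section
/- Let f be the solution of the evolution equation ḟ = (T − Id)f with f(0) = z. Then for every t ≥ 0 and every natural number n, ‖f(t) − T^[n](z)‖ ≤ ‖z − T(z)‖ · √(t + (n − t)²). -/
/-!
Multiplying the equation by `eᵗ` gives Duhamel's formula `eᵗ f(t) = z + ∫₀ᵗ eˢ T(f(s)) ds`,
hence `eᵗ ‖f(t) - c‖ ≤ ‖z - c‖ + ∫₀ᵗ eˢ ‖T(f(s)) - c‖ ds` for every `c`. Taking `c = T^[n+1] z`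
and using that `T` is nonexpansive, the bound `‖z - T z‖ ψₙ` for `‖f - T^[n] z‖` yields the
bound `‖z - T z‖ ψₙ₊₁` for `‖f - T^[n+1] z‖`, where `ψₙ(t) = √(t + (n - t)²)`: this comes down
to `ψₙ₊₁(0) = n + 1` and `ψₙ ≤ ψₙ₊₁ + ψₙ₊₁'`, which is AM-GM since
`ψₙ² = ψₙ₊₁² + 1 - 2 (n + 1 - t)`. For `n = 0` the same estimate with `c = z` is a Grönwall
inequality giving `‖f(t) - z‖ ≤ t ‖z - T z‖`.
-/

open Real Set intervalIntegral

theorem LipschitzWith.dist_iterate_le {α : Type*} [PseudoMetricSpace α] {T : α → α}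
    (hT : LipschitzWith 1 T) (x : α) (n : ℕ) : dist x (T^[n] x) ≤ n * dist x (T x) := by
  induction n with
  | zero => simp
  | succ n ih =>
    calc dist x (T^[n + 1] x) ≤ dist x (T^[n] x) + dist (T^[n] x) (T^[n + 1] x) :=
          dist_triangle _ _ _
      _ ≤ n * dist x (T x) + dist x (T x) :=
          add_le_add ih (by simpa using hT.dist_iterate_succ_le_geometric x n)
      _ = (n + 1 : ℕ) * dist x (T x) := by push_cast; ring

theorem le_add_mul_of_exp_mul_le_add_integral {u : ℝ → ℝ} {a b t : ℝ} (ht : 0 ≤ t)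
    (hu : ContinuousOn u (Icc 0 t))
    (h : ∀ s ∈ Icc 0 t, exp s * u s ≤ a + ∫ r in 0..s, exp r * (u r + b)) :
    u t ≤ a + b * t := by
  set H : ℝ → ℝ := fun s ↦ a + ∫ r in 0..s, exp r * (u r + b)
  have hcont : ContinuousOn (fun r ↦ exp r * (u r + b)) (Icc 0 t) :=
    continuousOn_exp.mul (hu.add continuousOn_const)
  have hH : ∀ s ∈ Ioo 0 t, HasDerivAt H (exp s * (u s + b)) s := fun s hs ↦
    ((integral_hasStrictDerivAt_right
      ((hcont.mono (Icc_subset_Icc le_rfl hs.2.le)).intervalIntegrable_of_Icc hs.1.le)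
      ((hcont.mono Ioo_subset_Icc_self).stronglyMeasurableAtFilter isOpen_Ioo s hs)
      (hcont.continuousAt (Icc_mem_nhds hs.1 hs.2))).hasDerivAt).const_add a
  have hHcont : ContinuousOn H (Icc 0 t) := by
    have hprim := continuousOn_primitive_interval' (μ := MeasureTheory.volume)
      (hcont.intervalIntegrable_of_Icc ht) left_mem_uIcc
    rw [uIcc_of_le ht] at hprim
    exact continuousOn_const.add hprim
  have hanti : AntitoneOn (fun s ↦ exp (-s) * H s - b * s) (Icc 0 t) := by
    refine antitoneOn_of_hasDerivWithinAt_nonpos (convex_Icc 0 t)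
      (((continuous_exp.comp continuous_neg).continuousOn.mul hHcont).sub
        (continuous_const.mul continuous_id).continuousOn)
      (f' := fun s ↦ u s - exp (-s) * H s) (fun s hs ↦ ?_) (fun s hs ↦ ?_)
    · rw [interior_Icc] at hs
      refine HasDerivAt.hasDerivWithinAt ?_
      refine ((((hasDerivAt_neg s).exp).mul (hH s hs)).sub
        ((hasDerivAt_id s).const_mul b)).congr_deriv ?_
      rw [exp_neg]
      field_simp
      ring
    · rw [interior_Icc] at hs
      rw [sub_nonpos, exp_neg, inv_mul_eq_div, le_div_iff₀' (exp_pos s)]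
      exact h s (Ioo_subset_Icc_self hs)
  have hρ := hanti ⟨le_rfl, ht⟩ ⟨ht, le_rfl⟩ ht
  simp only [neg_zero, exp_zero, one_mul, mul_zero, sub_zero, H, integral_same, add_zero] at hρ
  calc u t = exp (-t) * (exp t * u t) := by
        rw [← mul_assoc, ← exp_add, neg_add_cancel, exp_zero, one_mul]
    _ ≤ exp (-t) * H t := by gcongr; exact h t ⟨ht, le_rfl⟩
    _ ≤ a + b * t := by linarith

section Duhamel

variable {E : Type*} [NormedAddCommGroup E] [NormedSpace ℝ E] [CompleteSpace E]
  {f g : ℝ → E} {t : ℝ}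

theorem exp_smul_eq_add_integral_of_hasDerivAt (ht : 0 ≤ t)
    (hf : ∀ s ∈ Icc 0 t, HasDerivAt f (g s - f s) s) (hg : ContinuousOn g (Icc 0 t)) :
    exp t • f t = f 0 + ∫ s in 0..t, exp s • g s := by
  have hderiv : ∀ s ∈ uIcc 0 t, HasDerivAt (fun r ↦ exp r • f r) (exp s • g s) s := by
    intro s hs
    rw [uIcc_of_le ht] at hs
    refine ((hasDerivAt_exp s).smul (hf s hs)).congr_deriv ?_
    rw [smul_sub]
    abel
  rw [integral_eq_sub_of_hasDerivAt hderiv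
    ((continuousOn_exp.smul hg).intervalIntegrable_of_Icc ht)]
  simp

theorem exp_mul_norm_sub_le_add_integral (c : E) {w : ℝ → ℝ} (ht : 0 ≤ t)
    (hf : ∀ s ∈ Icc 0 t, HasDerivAt f (g s - f s) s) (hg : ContinuousOn g (Icc 0 t))
    (hw : ContinuousOn w (Icc 0 t)) (hgw : ∀ s ∈ Icc 0 t, ‖g s - c‖ ≤ w s) :
    exp t * ‖f t - c‖ ≤ ‖f 0 - c‖ + ∫ s in 0..t, exp s * w s := by
  have hduhamel := exp_smul_eq_add_integral_of_hasDerivAt (f := (f · - c)) (g := (g · - c)) ht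
    (fun s hs ↦ ((hf s hs).sub_const c).congr_deriv (by abel)) (hg.sub continuousOn_const)
  calc exp t * ‖f t - c‖ = ‖exp t • (f t - c)‖ := by
        rw [norm_smul, norm_of_nonneg (exp_pos t).le]
    _ ≤ ‖f 0 - c‖ + ‖∫ s in 0..t, exp s • (g s - c)‖ := by
        rw [hduhamel]
        exact norm_add_le _ _
    _ ≤ ‖f 0 - c‖ + ∫ s in 0..t, ‖exp s • (g s - c)‖ := by
        gcongr
        exact norm_integral_le_integral_norm ht
    _ ≤ ‖f 0 - c‖ + ∫ s in 0..t, exp s * w s := by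
        gcongr
        refine integral_mono_on ht ?_ (continuousOn_exp.mul hw |>.intervalIntegrable_of_Icc ht)
          fun s hs ↦ ?_
        · exact (continuousOn_exp.smul (hg.sub continuousOn_const)).norm.intervalIntegrable_of_Icc
            ht
        · rw [norm_smul, norm_of_nonneg (exp_pos s).le]
          exact mul_le_mul_of_nonneg_left (hgw s hs) (exp_pos s).le

end Duhamel

noncomputable def chernoffBound (m t : ℝ) : ℝ := √(t + (m - t) ^ 2)

theorem continuous_chernoffBound (m : ℝ) : Continuous (chernoffBound m) := by
  unfold chernoffBound
  fun_prop

theorem hasDerivAt_chernoffBound (m : ℝ) {t : ℝ} (ht : 0 < t) :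
    HasDerivAt (chernoffBound m) ((1 - 2 * (m - t)) / (2 * chernoffBound m t)) t := by
  have hq : HasDerivAt (fun s ↦ s + (m - s) ^ 2) (1 - 2 * (m - t)) t := by
    refine ((hasDerivAt_id t).add (((hasDerivAt_id t).const_sub m).pow 2)).congr_deriv ?_
    simp only [id, Nat.cast_ofNat]
    ring
  exact hq.sqrt (by positivity)

theorem chernoffBound_sub_one_le (m : ℝ) {t : ℝ} (ht : 0 < t) :
    chernoffBound (m - 1) t ≤ chernoffBound m t + (1 - 2 * (m - t)) / (2 * chernoffBound m t) := by
  set p := chernoffBound (m - 1) t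
  set q := chernoffBound m t
  have hq : 0 < q := sqrt_pos.mpr (by positivity)
  have hp2 : p ^ 2 = t + (m - 1 - t) ^ 2 := sq_sqrt (by positivity)
  have hq2 : q ^ 2 = t + (m - t) ^ 2 := sq_sqrt (by positivity)
  rw [← sub_nonneg]
  have : q + (1 - 2 * (m - t)) / (2 * q) - p = (p - q) ^ 2 / (2 * q) := by
    field_simp
    nlinarith
  rw [this]
  positivity

theorem add_integral_exp_mul_chernoffBound_le {m t : ℝ} (hm : 0 ≤ m) (ht : 0 ≤ t) :
    m + ∫ s in 0..t, exp s * chernoffBound (m - 1) s ≤ exp t * chernoffBound m t := by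
  have hcont : Continuous fun s ↦ exp s * chernoffBound (m - 1) s :=
    continuous_exp.mul (continuous_chernoffBound _)
  have hmono : MonotoneOn
      (fun s ↦ exp s * chernoffBound m s - ∫ r in 0..s, exp r * chernoffBound (m - 1) r)
      (Icc 0 t) := by
    refine monotoneOn_of_hasDerivWithinAt_nonneg (convex_Icc 0 t)
      ((continuous_exp.mul (continuous_chernoffBound m)).sub
        (continuous_primitive hcont.intervalIntegrable 0)).continuousOn
      (f' := fun s ↦ exp s * (chernoffBound m s + (1 - 2 * (m - s)) / (2 * chernoffBound m s)
        - chernoffBound (m - 1) s)) (fun s hs ↦ ?_) (fun s hs ↦ ?_)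
    · rw [interior_Icc] at hs
      refine HasDerivAt.hasDerivWithinAt ?_
      refine (((hasDerivAt_exp s).mul (hasDerivAt_chernoffBound m hs.1)).sub
        (hcont.integral_hasStrictDerivAt 0 s).hasDerivAt).congr_deriv ?_
      ring
    · rw [interior_Icc] at hs
      exact mul_nonneg (exp_pos s).le (sub_nonneg.mpr (chernoffBound_sub_one_le m hs.1))
  have h := hmono ⟨le_rfl, ht⟩ ⟨ht, le_rfl⟩ ht
  simp only [exp_zero, one_mul, integral_same, chernoffBound, zero_add, sub_zero,
    sqrt_sq hm] at h
  unfold chernoffBound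
  linarith

section Solution

variable {E : Type*} [NormedAddCommGroup E] [NormedSpace ℝ E] [CompleteSpace E]
  {T : E → E} {f : ℝ → E} {t : ℝ}

theorem norm_sub_le_mul_of_hasDerivAt (hT : LipschitzWith 1 T)
    (hf : ∀ s, 0 ≤ s → HasDerivAt f (T (f s) - f s) s) (ht : 0 ≤ t) :
    ‖f t - f 0‖ ≤ ‖f 0 - T (f 0)‖ * t := by
  have hfc : ContinuousOn f (Icc 0 t) := fun s hs ↦ (hf s hs.1).continuousAt.continuousWithinAt
  have hu : ContinuousOn (fun s ↦ ‖f s - f 0‖) (Icc 0 t) := (hfc.sub continuousOn_const).norm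
  have hTf : ∀ r, ‖T (f r) - f 0‖ ≤ ‖f r - f 0‖ + ‖f 0 - T (f 0)‖ := fun r ↦
    calc ‖T (f r) - f 0‖ ≤ ‖T (f r) - T (f 0)‖ + ‖T (f 0) - f 0‖ :=
          norm_sub_le_norm_sub_add_norm_sub _ _ _
      _ ≤ ‖f r - f 0‖ + ‖f 0 - T (f 0)‖ := by
          rw [norm_sub_rev (T (f 0))]
          gcongr
          simpa using hT.norm_sub_le (f r) (f 0)
  have hest : ∀ s ∈ Icc 0 t,
      exp s * ‖f s - f 0‖ ≤ 0 + ∫ r in 0..s, exp r * (‖f r - f 0‖ + ‖f 0 - T (f 0)‖) := by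
    intro s hs
    have hsub : Icc 0 s ⊆ Icc 0 t := Icc_subset_Icc le_rfl hs.2
    simpa using exp_mul_norm_sub_le_add_integral (f 0) hs.1 (fun r hr ↦ hf r hr.1)
      (hT.continuous.comp_continuousOn (hfc.mono hsub))
      ((hu.mono hsub).add continuousOn_const) fun r _ ↦ hTf r
  simpa using le_add_mul_of_exp_mul_le_add_integral ht hu hest

theorem norm_sub_iterate_succ_le_of_hasDerivAt (hT : LipschitzWith 1 T)
    (hf : ∀ s, 0 ≤ s → HasDerivAt f (T (f s) - f s) s) (ht : 0 ≤ t) (n : ℕ)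
    (ih : ∀ s ∈ Icc 0 t, ‖f s - T^[n] (f 0)‖ ≤ ‖f 0 - T (f 0)‖ * chernoffBound n s) :
    ‖f t - T^[n + 1] (f 0)‖ ≤ ‖f 0 - T (f 0)‖ * chernoffBound (n + 1) t := by
  set C := ‖f 0 - T (f 0)‖
  have hfc : ContinuousOn f (Icc 0 t) := fun s hs ↦ (hf s hs.1).continuousAt.continuousWithinAt
  have hduhamel := exp_mul_norm_sub_le_add_integral (T^[n + 1] (f 0))
    (w := fun s ↦ C * chernoffBound n s) ht (fun s hs ↦ hf s hs.1)
    (hT.continuous.comp_continuousOn hfc)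
    (continuous_const.mul (continuous_chernoffBound n)).continuousOn fun s hs ↦ by
      rw [Function.iterate_succ_apply']
      calc ‖T (f s) - T (T^[n] (f 0))‖ ≤ ‖f s - T^[n] (f 0)‖ := by
            simpa using hT.norm_sub_le (f s) (T^[n] (f 0))
        _ ≤ C * chernoffBound n s := ih s hs
  have hstart : ‖f 0 - T^[n + 1] (f 0)‖ ≤ C * (n + 1) := by
    simpa [dist_eq_norm, mul_comm] using hT.dist_iterate_le (f 0) (n + 1)
  have hintegral : ∫ s in 0..t, exp s * (C * chernoffBound n s) =
      C * ∫ s in 0..t, exp s * chernoffBound n s := by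
    simp_rw [mul_left_comm _ C]
    exact integral_const_mul C _
  have hbound := add_integral_exp_mul_chernoffBound_le (m := n + 1) (by positivity) ht
  rw [add_sub_cancel_right] at hbound
  refine le_of_mul_le_mul_left ?_ (exp_pos t)
  calc exp t * ‖f t - T^[n + 1] (f 0)‖
      ≤ C * (n + 1) + C * ∫ s in 0..t, exp s * chernoffBound n s := by
        rw [← hintegral]
        linarith
    _ ≤ C * (exp t * chernoffBound (n + 1) t) := by
        rw [← mul_add]
        gcongr
    _ = exp t * (C * chernoffBound (n + 1) t) := mul_left_comm _ _ _

end Solution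

/-- Generalized Chernoff formula: if `f` solves the evolution equation
`ḟ = (T - Id) f` with `f 0 = z` for a nonexpansive map `T` on a Banach space,
then `‖f t - T^[n] z‖ ≤ ‖z - T z‖ * √(t + (n - t)²)`. -/
theorem chernoff_formula
    {Z : Type*} [NormedAddCommGroup Z] [NormedSpace ℝ Z] [CompleteSpace Z]
    (T : Z → Z) (hT : ∀ x y : Z, ‖T x - T y‖ ≤ ‖x - y‖)
    (z : Z) (f : ℝ → Z) (hf0 : f 0 = z)
    (hf : ∀ t : ℝ, 0 ≤ t → HasDerivAt f (T (f t) - f t) t)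
    (t : ℝ) (ht : 0 ≤ t) (n : ℕ) :
    ‖f t - T^[n] z‖ ≤ ‖z - T z‖ * Real.sqrt (t + ((n : ℝ) - t) ^ 2) := by
  have hT' : LipschitzWith 1 T := lipschitzWith_iff_norm_sub_le.2 fun x y ↦ by simpa using hT x y
  subst hf0
  induction n generalizing t with
  | zero =>
    calc ‖f t - f 0‖ ≤ ‖f 0 - T (f 0)‖ * t := norm_sub_le_mul_of_hasDerivAt hT' hf ht
      _ ≤ ‖f 0 - T (f 0)‖ * √(t + ((0 : ℕ) - t) ^ 2) := by
        gcongr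
        exact le_sqrt_of_sq_le (by push_cast; nlinarith)
  | succ n ih =>
    exact_mod_cast norm_sub_iterate_succ_le_of_hasDerivAt hT' hf ht n fun s hs ↦ ih s hs.1
end

section
/- Let f be the solution of the evolution equation ḟ = (T − Id)f with f(0) = 0. Then for every natural number n ≥ 1, (1/n)·‖f(n) − T^[n](0)‖ ≤ ‖T(0)‖ / √n. -/
/-!
The solution `f` is a nonlinear analogue of the Poisson average `𝔼[T^[N_t] 0]` (`N_t` Poisson of
mean `t`), and `‖T^[j] 0 - T^[k] 0‖ ≤ |j - k| ‖T 0‖`; accordingly `‖f t - T^[k] 0‖` is at most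
`‖T 0‖` times the `L²` distance `√((k - t)² + t)` from `N_t` to `k`. Since `exp t • (f t - y)` has
derivative `exp t • (T (f t) - y)`, a majorant `Φ` of `‖f - y‖` only needs
`‖T (f x) - y‖ ≤ Φ x + Φ' x`. With `y = T^[k+1] 0` nonexpansiveness bounds the left side by
`‖f x - T^[k] 0‖`, which gives the induction on `k`; the case `k = 0`, `‖f t‖ ≤ t ‖T 0‖`, follows
from `‖T x‖ ≤ ‖x‖ + ‖T 0‖` by a fencing argument. Taking `k = t = n` gives the theorem.
-/

open Real

noncomputable def poissonL2Dist (k t : ℝ) : ℝ := √((k - t) ^ 2 + t)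

lemma poissonL2Dist_zero_right {k : ℝ} (hk : 0 ≤ k) : poissonL2Dist k 0 = k := by
  simp [poissonL2Dist, sqrt_sq hk]

lemma poissonL2Dist_self (t : ℝ) : poissonL2Dist t t = √t := by
  simp [poissonL2Dist]

lemma le_poissonL2Dist_zero_left {t : ℝ} (ht : 0 ≤ t) : t ≤ poissonL2Dist 0 t :=
  le_sqrt_of_sq_le (by nlinarith)

lemma poissonL2Dist_arg_pos {k : ℝ} (hk : 1 / 4 < k) (t : ℝ) : 0 < (k - t) ^ 2 + t := by
  nlinarith [sq_nonneg (2 * (k - t) - 1)]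

lemma hasDerivAt_poissonL2Dist {k : ℝ} (hk : 1 / 4 < k) (t : ℝ) :
    HasDerivAt (poissonL2Dist k) ((1 - 2 * (k - t)) / (2 * poissonL2Dist k t)) t := by
  have h : HasDerivAt (fun s => (k - s) ^ 2 + s) (1 - 2 * (k - t)) t :=
    ((((hasDerivAt_id' t).const_sub k).fun_pow 2).fun_add (hasDerivAt_id' t)).congr_deriv
      (by ring)
  exact h.sqrt (poissonL2Dist_arg_pos hk t).ne'

lemma poissonL2Dist_le_add_deriv {k s : ℝ} (hk : 0 ≤ k) (hs : 0 ≤ s) :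
    poissonL2Dist k s ≤
      poissonL2Dist (k + 1) s + (1 - 2 * (k + 1 - s)) / (2 * poissonL2Dist (k + 1) s) := by
  set a := poissonL2Dist (k + 1) s
  set b := poissonL2Dist k s
  have ha : 0 < a := sqrt_pos.mpr (poissonL2Dist_arg_pos (by linarith) s)
  have ha2 : a ^ 2 = (k + 1 - s) ^ 2 + s := sq_sqrt (poissonL2Dist_arg_pos (by linarith) s).le
  have hb2 : b ^ 2 = (k - s) ^ 2 + s := sq_sqrt (by positivity)
  rw [← sub_nonneg]
  have key : a + (1 - 2 * (k + 1 - s)) / (2 * a) - b = (a - b) ^ 2 / (2 * a) := by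
    field_simp
    nlinarith
  rw [key]
  positivity

lemma norm_iterate_sub_le {Z : Type*} [NormedAddCommGroup Z] {T : Z → Z}
    (hT : ∀ x y : Z, ‖T x - T y‖ ≤ ‖x - y‖) (x : Z) (k : ℕ) : ‖T^[k] x - x‖ ≤ k * ‖T x - x‖ := by
  induction k with
  | zero => simp
  | succ k ih =>
    calc ‖T^[k + 1] x - x‖ ≤ ‖T (T^[k] x) - T x‖ + ‖T x - x‖ := by
          rw [Function.iterate_succ_apply']
          exact norm_sub_le_norm_sub_add_norm_sub _ _ _
      _ ≤ (k + 1 : ℕ) * ‖T x - x‖ := by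
          push_cast
          linarith [hT (T^[k] x) x]

section Evolution

variable {Z : Type*} [NormedAddCommGroup Z] [NormedSpace ℝ Z] {T : Z → Z} {f : ℝ → Z}
  (hf : ∀ t, 0 ≤ t → HasDerivAt f (T (f t) - f t) t)
include hf

lemma hasDerivAt_exp_smul_sub (y : Z) {x : ℝ} (hx : 0 ≤ x) :
    HasDerivAt (fun s => exp s • (f s - y)) (exp x • (T (f x) - y)) x :=
  ((hasDerivAt_exp x).smul ((hf x hx).sub_const y)).congr_deriv (by
    rw [← smul_add, sub_add_sub_cancel])

variable {Φ Φ' : ℝ → ℝ}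

lemma norm_sub_le_of_norm_map_sub_le (hΦ : ∀ x, HasDerivAt Φ (Φ' x) x) {y : Z}
    (h0 : ‖f 0 - y‖ ≤ Φ 0)
    (hbound : ∀ x, 0 ≤ x → ‖T (f x) - y‖ ≤ Φ x + Φ' x) {t : ℝ} (ht : 0 ≤ t) :
    ‖f t - y‖ ≤ Φ t := by
  have hw := fun x (hx : 0 ≤ x) => hasDerivAt_exp_smul_sub hf y hx
  have := image_norm_le_of_norm_deriv_right_le_deriv_boundary (a := 0) (b := t)
    (fun x hx => (hw x hx.1).continuousAt.continuousWithinAt)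
    (fun x hx => (hw x hx.1).hasDerivWithinAt) (by simpa using h0)
    (fun x => (hasDerivAt_exp x).mul (hΦ x))
    (fun x hx => by
      rw [norm_smul_of_nonneg (exp_pos _).le, ← mul_add]
      exact mul_le_mul_of_nonneg_left (hbound x hx.1) (exp_pos x).le) ⟨ht, le_rfl⟩
  rw [norm_smul_of_nonneg (exp_pos _).le] at this
  exact le_of_mul_le_mul_left this (exp_pos t)

lemma norm_sub_le_of_norm_map_sub_lt (hΦ : ∀ x, HasDerivAt Φ (Φ' x) x) {y : Z}
    (h0 : ‖f 0 - y‖ ≤ Φ 0)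
    (hbound : ∀ x, 0 ≤ x → ‖f x - y‖ = Φ x → ‖T (f x) - y‖ < Φ x + Φ' x) {t : ℝ} (ht : 0 ≤ t) :
    ‖f t - y‖ ≤ Φ t := by
  have hw := fun x (hx : 0 ≤ x) => hasDerivAt_exp_smul_sub hf y hx
  have := image_norm_le_of_norm_deriv_right_lt_deriv_boundary (a := 0) (b := t)
    (fun x hx => (hw x hx.1).continuousAt.continuousWithinAt)
    (fun x hx => (hw x hx.1).hasDerivWithinAt) (by simpa using h0)
    (fun x => (hasDerivAt_exp x).mul (hΦ x))
    (fun x hx hx_eq => by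
      rw [norm_smul_of_nonneg (exp_pos _).le] at hx_eq ⊢
      rw [← mul_add]
      exact mul_lt_mul_of_pos_left (hbound x hx.1 (mul_left_cancel₀ (exp_pos x).ne' hx_eq))
        (exp_pos x)) ⟨ht, le_rfl⟩
  rw [norm_smul_of_nonneg (exp_pos _).le] at this
  exact le_of_mul_le_mul_left this (exp_pos t)

variable (hT : ∀ x y : Z, ‖T x - T y‖ ≤ ‖x - y‖)
include hT

lemma norm_le_norm_map_zero_mul (hf0 : f 0 = 0) {t : ℝ} (ht : 0 ≤ t) : ‖f t‖ ≤ ‖T 0‖ * t := by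
  refine le_of_forall_pos_le_add fun ε hε => ?_
  set δ := ε / exp t
  have hΦ : ∀ x, HasDerivAt (fun x => ‖T 0‖ * x + δ * exp x) (‖T 0‖ + δ * exp x) x :=
    fun x => (((hasDerivAt_id x).const_mul _).add ((hasDerivAt_exp x).const_mul δ)).congr_deriv
      (by simp)
  have h0 : ‖f 0 - 0‖ ≤ ‖T 0‖ * 0 + δ * exp 0 := by
    simp only [hf0, sub_zero, norm_zero, mul_zero, exp_zero, mul_one, zero_add]
    positivity
  have hbound (x : ℝ) (_ : 0 ≤ x) (hx : ‖f x - 0‖ = ‖T 0‖ * x + δ * exp x) :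
      ‖T (f x) - 0‖ < ‖T 0‖ * x + δ * exp x + (‖T 0‖ + δ * exp x) := by
    simp only [sub_zero] at hx ⊢
    have := norm_le_norm_sub_add (T (f x)) (T 0)
    have := hT (f x) 0
    rw [sub_zero] at this
    have : 0 < δ * exp x := by positivity
    linarith
  simpa [δ, div_mul_cancel₀ ε (exp_pos t).ne'] using
    norm_sub_le_of_norm_map_sub_lt hf hΦ h0 hbound ht

theorem norm_sub_iterate_le_poissonL2Dist (hf0 : f 0 = 0) (k : ℕ) {t : ℝ} (ht : 0 ≤ t) :
    ‖f t - T^[k] 0‖ ≤ ‖T 0‖ * poissonL2Dist k t := by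
  induction k generalizing t with
  | zero =>
    simpa using (norm_le_norm_map_zero_mul hf hT hf0 ht).trans
      (mul_le_mul_of_nonneg_left (le_poissonL2Dist_zero_left ht) (norm_nonneg _))
  | succ k ih =>
    push_cast
    have hk : (0 : ℝ) ≤ k := k.cast_nonneg
    refine norm_sub_le_of_norm_map_sub_le hf
      (fun x => (hasDerivAt_poissonL2Dist (by linarith) x).const_mul ‖T 0‖) ?_ ?_ ht
    · rw [hf0, zero_sub, norm_neg, poissonL2Dist_zero_right (by linarith), mul_comm]
      simpa using norm_iterate_sub_le hT 0 (k + 1)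
    · intro x hx
      calc ‖T (f x) - T^[k + 1] 0‖ = ‖T (f x) - T (T^[k] 0)‖ := by
            rw [Function.iterate_succ_apply']
        _ ≤ ‖T 0‖ * poissonL2Dist k x := (hT _ _).trans (ih hx)
        _ ≤ _ := by
            rw [← mul_add]
            exact mul_le_mul_of_nonneg_left (poissonL2Dist_le_add_deriv hk hx) (norm_nonneg _)

end Evolution

theorem chernoff_normalized_general
    {Z : Type*} [NormedAddCommGroup Z] [NormedSpace ℝ Z]
    (T : Z → Z) (hT : ∀ x y : Z, ‖T x - T y‖ ≤ ‖x - y‖)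
    (f : ℝ → Z) (hf0 : f 0 = 0)
    (hf : ∀ t : ℝ, 0 ≤ t → HasDerivAt f (T (f t) - f t) t)
    (n : ℕ) :
    (1 / (n : ℝ)) * ‖f (n : ℝ) - T^[n] 0‖ ≤ ‖T 0‖ / Real.sqrt (n : ℝ) := by
  have h := norm_sub_iterate_le_poissonL2Dist hf hT hf0 n n.cast_nonneg
  rw [poissonL2Dist_self] at h
  calc 1 / (n : ℝ) * ‖f n - T^[n] 0‖ ≤ 1 / n * (‖T 0‖ * √n) := by gcongr
    _ = ‖T 0‖ / √n := by rw [div_eq_mul_one_div ‖T 0‖, ← sqrt_div_self']; ring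

/-- If `f` solves `ḟ = (T - Id) f` with `f 0 = 0` for a nonexpansive map `T`,
then for every `n ≥ 1`, `(1/n) ‖f n - T^[n] 0‖ ≤ ‖T 0‖ / √n`. -/
theorem chernoff_normalized
    {Z : Type*} [NormedAddCommGroup Z] [NormedSpace ℝ Z] [CompleteSpace Z]
    (T : Z → Z) (hT : ∀ x y : Z, ‖T x - T y‖ ≤ ‖x - y‖)
    (f : ℝ → Z) (hf0 : f 0 = 0)
    (hf : ∀ t : ℝ, 0 ≤ t → HasDerivAt f (T (f t) - f t) t)
    (n : ℕ) (hn : 1 ≤ n) :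
    (1 / (n : ℝ)) * ‖f (n : ℝ) - T^[n] 0‖ ≤ ‖T 0‖ / Real.sqrt (n : ℝ) :=
  chernoff_normalized_general T hT f hf0 hf n
end

section
/- Let (h_k)_{k≥1} be a sequence in [0,1], let z ∈ Z, and let (z_k) be the Eulerian scheme z_0 = z, z_{k+1} = (1 − h_{k+1})·z_k + h_{k+1}·T(z_k). Set σ_k = Σ_{i=1}^k h_i and τ_k = Σ_{i=1}^k h_i². Let f be the solution of the evolution equation ḟ = (T − Id)f with f(0) = z. Then for every t ≥ 0 and every k: ‖f(t) − z_k‖ ≤ ‖z − T(z)‖ · √((σ_k − t)² + τ_k). -/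
/-!
Write `C = ‖z - T z‖`. The displacement `‖T x - x‖` is nonincreasing both along the scheme
(an averaged step of a nonexpansive map) and along the flow (two trajectories never separate,
by Gronwall applied to `e^s (f (s + ε) - f s)`, and the displacement is the limit of
`ε⁻¹ ‖f (s + ε) - f s‖`). Hence `‖f t - z‖ ≤ C t` and `‖z_k - z‖ ≤ C σ_k`, the case `k = 0` and
the value at `t = 0` of the estimate.

The estimate then goes by induction on `k`. With `a = h_{k+1} > 0`, the function
`e^{s/a} (f s - z_{k+1})` has derivative `e^{s/a} (a⁻¹ (f s - z_{k+1}) + T (f s) - f s)`, whose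
norm is at most `a⁻¹ e^{s/a} ‖f s - z_k‖` since `T` is nonexpansive. By the induction
hypothesis and the elementary inequality `√(Q (Q - 2x)) ≤ Q - x`, this is dominated by the
derivative of `C e^{s/a} √((σ_{k+1} - s)² + τ_{k+1})`, and a fencing argument concludes.
-/

open Real Set

theorem sqrt_mul_sub_two_mul_le {q x : ℝ} (hx : x ≤ q) : √(q * (q - 2 * x)) ≤ q - x :=
  sqrt_le_iff.2 ⟨sub_nonneg.2 hx, by nlinarith [sq_nonneg x]⟩

theorem exists_hasDerivAt_exp_mul_sqrt_ge {a σ τ : ℝ} (ha : 0 < a) (hτ : 0 ≤ τ) (s : ℝ) :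
    ∃ d, HasDerivAt (fun s => exp (s / a) * √((σ + a - s) ^ 2 + (τ + a ^ 2))) d s ∧
      exp (s / a) / a * √((σ - s) ^ 2 + τ) ≤ d := by
  set u := σ + a - s
  set Q := u ^ 2 + (τ + a ^ 2)
  have hQ : 0 < Q := by positivity
  refine ⟨_, (((hasDerivAt_id s).div_const a).exp).mul
    ((((hasDerivAt_id s).const_sub (σ + a)).pow 2).add_const (τ + a ^ 2) |>.sqrt hQ.ne'), ?_⟩
  have hR : (σ - s) ^ 2 + τ = Q - 2 * (a * u) := by ring
  have hkey : √((σ - s) ^ 2 + τ) * √Q ≤ Q - a * u := by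
    rw [hR, ← sqrt_mul' _ hQ.le, mul_comm]
    exact sqrt_mul_sub_two_mul_le (by nlinarith [sq_nonneg (u - a / 2)])
  calc exp (s / a) / a * √((σ - s) ^ 2 + τ)
      = exp (s / a) / (a * √Q) * (√((σ - s) ^ 2 + τ) * √Q) := by field_simp
    _ ≤ exp (s / a) / (a * √Q) * (Q - a * u) := by gcongr
    _ = _ := by
      simp only [id, Pi.pow_apply]
      field_simp
      rw [sq_sqrt hQ.le]
      ring

section Nonexpansive

variable {E : Type*} [NormedAddCommGroup E] [NormedSpace ℝ E] {T : E → E}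

theorem norm_sub_le_of_hasDerivAt_nonexpansive_flow
    (hT : ∀ x y, ‖T x - T y‖ ≤ ‖x - y‖) {f g : ℝ → E}
    (hf : ∀ t, 0 ≤ t → HasDerivAt f (T (f t) - f t) t)
    (hg : ∀ t, 0 ≤ t → HasDerivAt g (T (g t) - g t) t) {t : ℝ} (ht : 0 ≤ t) :
    ‖f t - g t‖ ≤ ‖f 0 - g 0‖ := by
  set F : ℝ → E := fun s => exp s • (f s - g s)
  have hF : ∀ s ∈ Icc 0 t, HasDerivAt F (exp s • (T (f s) - T (g s))) s := fun s hs =>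
    ((hasDerivAt_exp s).smul ((hf s hs.1).sub (hg s hs.1))).congr_deriv
      (by simp only [Pi.sub_apply, smul_sub]; abel)
  have hnormF : ∀ s, ‖F s‖ = exp s * ‖f s - g s‖ := fun s => by
    simp only [F, norm_smul, norm_eq_abs, abs_exp]
  have := norm_le_gronwallBound_of_norm_deriv_right_le (K := 1) (ε := 0)
    (fun s hs => (hF s hs).continuousAt.continuousWithinAt)
    (fun s hs => (hF s (Ico_subset_Icc_self hs)).hasDerivWithinAt) le_rfl
    (fun s _ => by
      rw [norm_smul, norm_eq_abs, abs_exp, hnormF, one_mul, add_zero]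
      exact mul_le_mul_of_nonneg_left (hT _ _) (exp_pos s).le)
    t ⟨ht, le_rfl⟩
  rw [gronwallBound_ε0, hnormF, hnormF, sub_zero, one_mul, exp_zero, one_mul, mul_comm] at this
  exact le_of_mul_le_mul_right this (exp_pos t)

theorem norm_displacement_le_of_hasDerivAt_nonexpansive_flow
    (hT : ∀ x y, ‖T x - T y‖ ≤ ‖x - y‖) {f : ℝ → E}
    (hf : ∀ t, 0 ≤ t → HasDerivAt f (T (f t) - f t) t) {t : ℝ} (ht : 0 ≤ t) :
    ‖T (f t) - f t‖ ≤ ‖T (f 0) - f 0‖ := by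
  have hshift : ∀ ε > (0 : ℝ), ‖ε⁻¹ • (f (t + ε) - f t)‖ ≤ ‖ε⁻¹ • (f (0 + ε) - f 0)‖ :=
    fun ε hε => by
      rw [norm_smul, norm_smul]
      refine mul_le_mul_of_nonneg_left ?_ (norm_nonneg _)
      exact norm_sub_le_of_hasDerivAt_nonexpansive_flow hT
        (fun s hs => (hf (s + ε) (by linarith)).comp_add_const s ε) hf ht
  exact le_of_tendsto_of_tendsto (hf t ht).tendsto_slope_zero_right.norm
    (hf 0 le_rfl).tendsto_slope_zero_right.norm (eventually_nhdsWithin_of_forall hshift)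

theorem norm_sub_initial_le_of_hasDerivAt_nonexpansive_flow
    (hT : ∀ x y, ‖T x - T y‖ ≤ ‖x - y‖) {f : ℝ → E}
    (hf : ∀ t, 0 ≤ t → HasDerivAt f (T (f t) - f t) t) {t : ℝ} (ht : 0 ≤ t) :
    ‖f t - f 0‖ ≤ ‖T (f 0) - f 0‖ * t := by
  simpa [abs_of_nonneg ht] using Convex.norm_image_sub_le_of_norm_hasDerivWithin_le
    (fun s hs => (hf s hs.1).hasDerivWithinAt)
    (fun s hs => norm_displacement_le_of_hasDerivAt_nonexpansive_flow hT hf hs.1)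
    (convex_Icc 0 t) (left_mem_Icc.2 ht) (right_mem_Icc.2 ht)

theorem norm_displacement_averaged_le (hT : ∀ x y, ‖T x - T y‖ ≤ ‖x - y‖) {a : ℝ}
    (ha : a ∈ Icc (0 : ℝ) 1) (y : E) :
    ‖T ((1 - a) • y + a • T y) - ((1 - a) • y + a • T y)‖ ≤ ‖T y - y‖ := by
  set w := (1 - a) • y + a • T y
  have hwy : ‖w - y‖ = a * ‖T y - y‖ := by
    rw [show w - y = a • (T y - y) by module, norm_smul, norm_eq_abs, abs_of_nonneg ha.1]
  have hTw : ‖T w - T y‖ ≤ a * ‖T y - y‖ := hwy ▸ hT w y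
  have hTwy : ‖T w - y‖ ≤ (1 + a) * ‖T y - y‖ := by
    calc ‖T w - y‖ ≤ ‖T w - T y‖ + ‖T y - y‖ := norm_sub_le_norm_sub_add_norm_sub _ _ _
      _ ≤ (1 + a) * ‖T y - y‖ := by linarith
  calc ‖T w - w‖ = ‖(1 - a) • (T w - y) + a • (T w - T y)‖ := by congr 1; module
    _ ≤ (1 - a) * ‖T w - y‖ + a * ‖T w - T y‖ := by
      refine (norm_add_le _ _).trans_eq ?_
      rw [norm_smul, norm_smul, norm_eq_abs, norm_eq_abs, abs_of_nonneg (sub_nonneg.2 ha.2),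
        abs_of_nonneg ha.1]
    _ ≤ (1 - a) * ((1 + a) * ‖T y - y‖) + a * (a * ‖T y - y‖) := by
      gcongr
      · exact sub_nonneg.2 ha.2
      · exact ha.1
    _ = ‖T y - y‖ := by ring

theorem norm_inv_smul_sub_averaged_add_le (hT : ∀ x y, ‖T x - T y‖ ≤ ‖x - y‖) {a : ℝ}
    (ha0 : 0 < a) (ha1 : a ≤ 1) (x y : E) :
    ‖a⁻¹ • (x - ((1 - a) • y + a • T y)) + (T x - x)‖ ≤ a⁻¹ * ‖x - y‖ := by
  have hcoef : 0 ≤ a⁻¹ - 1 := sub_nonneg.2 (one_le_inv_iff₀.2 ⟨ha0, ha1⟩)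
  calc ‖a⁻¹ • (x - ((1 - a) • y + a • T y)) + (T x - x)‖
      = ‖(a⁻¹ - 1) • (x - y) + (T x - T y)‖ := by
        congr 1
        rw [smul_sub, smul_add, smul_smul, smul_smul, inv_mul_cancel₀ ha0.ne', one_smul,
          mul_sub, inv_mul_cancel₀ ha0.ne', mul_one]
        module
    _ ≤ (a⁻¹ - 1) * ‖x - y‖ + ‖x - y‖ := by
      refine (norm_add_le _ _).trans (add_le_add ?_ (hT x y))
      rw [norm_smul, norm_eq_abs, abs_of_nonneg hcoef]
    _ = a⁻¹ * ‖x - y‖ := by ring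

theorem norm_flow_sub_averaged_le (hT : ∀ x y, ‖T x - T y‖ ≤ ‖x - y‖) {f : ℝ → E}
    (hf : ∀ t, 0 ≤ t → HasDerivAt f (T (f t) - f t) t) {y : E} {a σ τ C : ℝ}
    (ha0 : 0 < a) (ha1 : a ≤ 1) (hτ : 0 ≤ τ) (hC : 0 ≤ C) {t : ℝ} (ht : 0 ≤ t)
    (hprev : ∀ s ∈ Icc 0 t, ‖f s - y‖ ≤ C * √((σ - s) ^ 2 + τ))
    (hinit : ‖f 0 - ((1 - a) • y + a • T y)‖ ≤ C * √((σ + a) ^ 2 + (τ + a ^ 2))) :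
    ‖f t - ((1 - a) • y + a • T y)‖ ≤ C * √((σ + a - t) ^ 2 + (τ + a ^ 2)) := by
  set w := (1 - a) • y + a • T y
  choose d hd hd_ge using exists_hasDerivAt_exp_mul_sqrt_ge (σ := σ) ha0 hτ
  have hW : ∀ s ∈ Icc 0 t, HasDerivAt (fun s => exp (s / a) • (f s - w))
      (exp (s / a) • (a⁻¹ • (f s - w) + (T (f s) - f s))) s := fun s hs =>
    (((hasDerivAt_id s).div_const a).exp.smul ((hf s hs.1).sub_const w)).congr_deriv
      (by simp only [id]; module)
  have hfence := image_norm_le_of_norm_deriv_right_le_deriv_boundary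
    (B := fun s => C * (exp (s / a) * √((σ + a - s) ^ 2 + (τ + a ^ 2)))) (B' := fun s => C * d s)
    (fun s hs => (hW s hs).continuousAt.continuousWithinAt)
    (fun s hs => (hW s (Ico_subset_Icc_self hs)).hasDerivWithinAt)
    (by simpa using hinit) (fun s => (hd s).const_mul C)
    (fun s hs => by
      rw [norm_smul, norm_eq_abs, abs_exp]
      calc exp (s / a) * ‖a⁻¹ • (f s - w) + (T (f s) - f s)‖
          ≤ exp (s / a) * (a⁻¹ * (C * √((σ - s) ^ 2 + τ))) := by
            gcongr
            exact (norm_inv_smul_sub_averaged_add_le hT ha0 ha1 _ _).trans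
              (by gcongr; exact hprev s (Ico_subset_Icc_self hs))
        _ = C * (exp (s / a) / a * √((σ - s) ^ 2 + τ)) := by ring
        _ ≤ C * d s := by gcongr; exact hd_ge s)
    (right_mem_Icc.2 ht)
  rw [norm_smul, norm_eq_abs, abs_exp, mul_left_comm] at hfence
  exact le_of_mul_le_mul_left hfence (exp_pos _)

variable {h : ℕ → ℝ} {zs : ℕ → E}

theorem norm_scheme_displacement_le (hT : ∀ x y, ‖T x - T y‖ ≤ ‖x - y‖)
    (hh : ∀ i, h i ∈ Icc (0 : ℝ) 1)
    (hz : ∀ k, zs (k + 1) = (1 - h (k + 1)) • zs k + h (k + 1) • T (zs k)) (k : ℕ) :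
    ‖T (zs k) - zs k‖ ≤ ‖T (zs 0) - zs 0‖ := by
  induction k with
  | zero => exact le_rfl
  | succ k ih => exact (hz k ▸ norm_displacement_averaged_le hT (hh (k + 1)) (zs k)).trans ih

theorem norm_scheme_sub_initial_le (hT : ∀ x y, ‖T x - T y‖ ≤ ‖x - y‖)
    (hh : ∀ i, h i ∈ Icc (0 : ℝ) 1)
    (hz : ∀ k, zs (k + 1) = (1 - h (k + 1)) • zs k + h (k + 1) • T (zs k)) (k : ℕ) :
    ‖zs k - zs 0‖ ≤ ‖T (zs 0) - zs 0‖ * ∑ i ∈ Finset.range k, h (i + 1) := by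
  induction k with
  | zero => simp
  | succ k ih =>
    have hstep : ‖zs (k + 1) - zs k‖ = h (k + 1) * ‖T (zs k) - zs k‖ := by
      rw [hz k, show (1 - h (k + 1)) • zs k + h (k + 1) • T (zs k) - zs k
        = h (k + 1) • (T (zs k) - zs k) by module, norm_smul, norm_eq_abs,
        abs_of_nonneg (hh (k + 1)).1]
    calc ‖zs (k + 1) - zs 0‖ ≤ ‖zs (k + 1) - zs k‖ + ‖zs k - zs 0‖ :=
          norm_sub_le_norm_sub_add_norm_sub _ _ _
      _ ≤ h (k + 1) * ‖T (zs 0) - zs 0‖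
          + ‖T (zs 0) - zs 0‖ * ∑ i ∈ Finset.range k, h (i + 1) := by
        rw [hstep]
        gcongr
        · exact (hh (k + 1)).1
        · exact norm_scheme_displacement_le hT hh hz k
      _ = ‖T (zs 0) - zs 0‖ * ∑ i ∈ Finset.range (k + 1), h (i + 1) := by
        rw [Finset.sum_range_succ]; ring

end Nonexpansive

theorem eulerian_scheme_vs_flow_general
    {Z : Type*} [NormedAddCommGroup Z] [NormedSpace ℝ Z]
    (T : Z → Z) (hT : ∀ x y : Z, ‖T x - T y‖ ≤ ‖x - y‖)
    (h : ℕ → ℝ) (hh : ∀ i, h i ∈ Set.Icc (0 : ℝ) 1)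
    (z : Z) (zs : ℕ → Z) (hz0 : zs 0 = z)
    (hz : ∀ k, zs (k + 1) = (1 - h (k + 1)) • zs k + h (k + 1) • T (zs k))
    (f : ℝ → Z) (hf0 : f 0 = z)
    (hf : ∀ t : ℝ, 0 ≤ t → HasDerivAt f (T (f t) - f t) t)
    (t : ℝ) (ht : 0 ≤ t) (k : ℕ) :
    ‖f t - zs k‖ ≤ ‖z - T z‖ *
      Real.sqrt ((∑ i ∈ Finset.range k, h (i + 1) - t) ^ 2
        + ∑ i ∈ Finset.range k, (h (i + 1)) ^ 2) := by
  have hC : ‖T z - z‖ = ‖z - T z‖ := norm_sub_rev _ _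
  induction k generalizing t with
  | zero =>
    simpa [hz0, hf0, sqrt_sq ht, hC] using
      norm_sub_initial_le_of_hasDerivAt_nonexpansive_flow hT hf ht
  | succ k ih =>
    set σ := ∑ i ∈ Finset.range k, h (i + 1)
    set τ := ∑ i ∈ Finset.range k, h (i + 1) ^ 2
    have hτ : 0 ≤ τ := Finset.sum_nonneg fun i _ => sq_nonneg _
    rw [Finset.sum_range_succ, Finset.sum_range_succ]
    rcases (hh (k + 1)).1.eq_or_lt with ha | ha
    · simpa [hz k, ← ha] using ih t ht
    have hinit :
        ‖f 0 - zs (k + 1)‖ ≤ ‖z - T z‖ * √((σ + h (k + 1)) ^ 2 + (τ + h (k + 1) ^ 2)) :=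
      calc ‖f 0 - zs (k + 1)‖ ≤ ‖z - T z‖ * (σ + h (k + 1)) := by
            simpa [norm_sub_rev, hz0, hf0, hC, Finset.sum_range_succ] using
              norm_scheme_sub_initial_le hT hh hz (k + 1)
        _ ≤ _ := by
          gcongr
          exact le_sqrt_of_sq_le (le_add_of_nonneg_right (by positivity))
    rw [hz k] at hinit ⊢
    exact norm_flow_sub_averaged_le hT hf ha (hh (k + 1)).2 hτ (norm_nonneg _) ht
      (fun s hs => ih s hs.1) hinit

/-- Comparison of an Eulerian scheme with the solution of `ḟ = (T - Id) f`
(Vigeral): `‖f t - z_k‖ ≤ ‖z - T z‖ √((σ_k - t)² + τ_k)`. -/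
theorem eulerian_scheme_vs_flow
    {Z : Type*} [NormedAddCommGroup Z] [NormedSpace ℝ Z] [CompleteSpace Z]
    (T : Z → Z) (hT : ∀ x y : Z, ‖T x - T y‖ ≤ ‖x - y‖)
    (h : ℕ → ℝ) (hh : ∀ i, h i ∈ Set.Icc (0 : ℝ) 1)
    (z : Z) (zs : ℕ → Z) (hz0 : zs 0 = z)
    (hz : ∀ k, zs (k + 1) = (1 - h (k + 1)) • zs k + h (k + 1) • T (zs k))
    (f : ℝ → Z) (hf0 : f 0 = z)
    (hf : ∀ t : ℝ, 0 ≤ t → HasDerivAt f (T (f t) - f t) t)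
    (t : ℝ) (ht : 0 ≤ t) (k : ℕ) :
    ‖f t - zs k‖ ≤ ‖z - T z‖ *
      Real.sqrt ((∑ i ∈ Finset.range k, h (i + 1) - t) ^ 2
        + ∑ i ∈ Finset.range k, (h (i + 1)) ^ 2) :=
  eulerian_scheme_vs_flow_general T hT h hh z zs hz0 hz f hf0 hf t ht k
end

section
/- Let h ∈ (0,1], let h_1, …, h_k be step sizes with 0 ≤ h_i ≤ h for all i and Σ_{i=1}^k h_i = t, let z ∈ Z, and let (z_j) be the Eulerian scheme z_0 = z, z_{j+1} = (1 − h_{j+1})·z_j + h_{j+1}·T(z_j). Let f be the solution of the evolution equation ḟ = (T − Id)f with f(0) = z. Then ‖f(t) − z_k‖ ≤ ‖z − T(z)‖ · √(h·t). -/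
/-!
Two solutions of `ḟ = T f - f` never move apart: `e^u (f - g)` has derivative `e^u (T f - T g)`,
so Grönwall applies. Comparing `f` with its own time shifts, the speed `‖T f - f‖` is
nonincreasing, whence `‖f s - z‖ ≤ ‖z - T z‖ s`.

With `σ_j = ∑_{i ≤ j} h_i` and `A_j = ∑_{i ≤ j} h_i²`, induction on `j` gives
`‖f u - z_j‖ ≤ ‖z - T z‖ √(A_j + (u - σ_j)²)` for all `u ≥ 0`. Since `z_{j+1}` averages `z_j`
and `T z_j` with weight `e = h_{j+1}`, `φ = f - z_{j+1}` satisfies `‖φ + e φ'‖ ≤ ‖f - z_j‖`, and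
the new majorant `B` satisfies `B + e B' ≥` the old one; after multiplying by `e^{u/e}` this is a
comparison of derivatives. At `j = k`, `u = t` the majorant is `√(∑ h_i²) ≤ √(h t)`.
-/

open Set

theorem sqrt_add_add_sq_le {A : ℝ} (hA : 0 ≤ A) (x : ℝ) {e : ℝ} (he : e ≠ 0) :
    √(A + (x + e) ^ 2) ≤ √(A + e ^ 2 + x ^ 2) + e * x / √(A + e ^ 2 + x ^ 2) := by
  set P := A + e ^ 2 + x ^ 2
  have hP : 0 < P := by positivity
  have hD : 0 < √P := Real.sqrt_pos.2 hP
  have hRHS : √P + e * x / √P = (P + e * x) / √P := by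
    field_simp; rw [Real.sq_sqrt hP.le]
  have hLHS : A + (x + e) ^ 2 = P + 2 * e * x := by ring
  rw [hRHS, le_div_iff₀ hD, ← Real.sqrt_mul (by positivity), hLHS,
    Real.sqrt_le_left (by nlinarith [sq_nonneg (e + x / 2)])]
  nlinarith [sq_nonneg (e * x)]

theorem norm_le_of_norm_add_smul_deriv_le {E : Type*} [NormedAddCommGroup E] [NormedSpace ℝ E]
    {φ φ' : ℝ → E} {B B' : ℝ → ℝ} {a b e : ℝ} (he : 0 < e)
    (hφ : ContinuousOn φ (Icc a b)) (hφ' : ∀ x ∈ Ico a b, HasDerivWithinAt φ (φ' x) (Ici x) x)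
    (hB : ∀ x, HasDerivAt B (B' x) x) (ha : ‖φ a‖ ≤ B a)
    (bound : ∀ x ∈ Ico a b, ‖φ x + e • φ' x‖ ≤ B x + e * B' x) :
    ∀ ⦃x⦄, x ∈ Icc a b → ‖φ x‖ ≤ B x := by
  -- with the weight `exp (x / e)`, the combination `φ + e • φ'` becomes `e` times a derivative
  set w : ℝ → ℝ := fun x => Real.exp (x / e) with hw_def
  have hw : ∀ x, HasDerivAt w (w x * e⁻¹) x := fun x => by
    simpa [hw_def, div_eq_mul_inv] using ((hasDerivAt_id x).div_const e).exp
  have hw_pos : ∀ x, 0 < w x := fun x => Real.exp_pos _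
  have hwφ : ∀ x ∈ Ico a b, HasDerivWithinAt (fun x => w x • φ x)
      ((w x * e⁻¹) • (φ x + e • φ' x)) (Ici x) x := fun x hx =>
    ((hw x).hasDerivWithinAt.smul (hφ' x hx)).congr_deriv (by
      rw [smul_add, smul_smul, mul_assoc, inv_mul_cancel₀ he.ne', mul_one, add_comm])
  have hwB : ∀ x, HasDerivAt (fun x => w x * B x) (w x * e⁻¹ * (B x + e * B' x)) x := fun x =>
    ((hw x).mul (hB x)).congr_deriv (by field_simp)
  have hnorm : ∀ x (v : E), ‖w x • v‖ = w x * ‖v‖ := fun x v => by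
    rw [norm_smul, Real.norm_of_nonneg (hw_pos x).le]
  intro x hx
  have key := image_norm_le_of_norm_deriv_right_le_deriv_boundary
    (f := fun x => w x • φ x)
    ((Real.continuous_exp.comp (continuous_id.div_const e)).continuousOn.smul hφ) hwφ
    (by rw [hnorm]; exact mul_le_mul_of_nonneg_left ha (hw_pos a).le) hwB
    (fun x hx => by
      rw [norm_smul, Real.norm_of_nonneg (mul_pos (hw_pos x) (inv_pos.2 he)).le]
      exact mul_le_mul_of_nonneg_left (bound x hx) (mul_pos (hw_pos x) (inv_pos.2 he)).le) hx
  rw [hnorm] at key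
  exact le_of_mul_le_mul_left key (hw_pos x)

section

variable {Z : Type*} [NormedAddCommGroup Z] [NormedSpace ℝ Z] {T : Z → Z} {f g : ℝ → Z}

def eulerStep (T : Z → Z) (e : ℝ) (y : Z) : Z := (1 - e) • y + e • T y

theorem eulerStep_zero (T : Z → Z) (y : Z) : eulerStep T 0 y = y := by
  simp [eulerStep]

theorem eulerStep_sub_self (T : Z → Z) (e : ℝ) (y : Z) : eulerStep T e y - y = e • (T y - y) := by
  unfold eulerStep; module

theorem norm_eulerStep_sub_apply_le (hT : ∀ x y, ‖T x - T y‖ ≤ ‖x - y‖) {e : ℝ} (he : e ∈ Icc 0 1)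
    (y : Z) : ‖eulerStep T e y - T (eulerStep T e y)‖ ≤ ‖y - T y‖ := by
  set w := eulerStep T e y
  have hw : w - T w = (1 - e) • (y - T y) + (T y - T w) := by
    simp only [w, eulerStep]; module
  calc ‖w - T w‖ ≤ (1 - e) * ‖y - T y‖ + ‖w - y‖ := by
        rw [hw, norm_sub_rev w]
        refine (norm_add_le _ _).trans (add_le_add ?_ (hT _ _))
        rw [norm_smul, Real.norm_of_nonneg (by linarith [he.2])]
    _ = ‖y - T y‖ := by
        rw [eulerStep_sub_self, norm_smul, Real.norm_of_nonneg he.1, norm_sub_rev]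
        ring

theorem norm_euler_sub_apply_le (hT : ∀ x y, ‖T x - T y‖ ≤ ‖x - y‖) {hs : ℕ → ℝ} {zs : ℕ → Z}
    (hz : ∀ j, zs (j + 1) = eulerStep T (hs (j + 1)) (zs j)) {j : ℕ}
    (hsteps : ∀ i ∈ Finset.Icc 1 j, hs i ∈ Icc 0 1) : ‖zs j - T (zs j)‖ ≤ ‖zs 0 - T (zs 0)‖ := by
  induction j with
  | zero => rfl
  | succ j ih =>
    rw [hz]
    refine (norm_eulerStep_sub_apply_le hT (hsteps _ ?_) _).trans (ih fun i hi => hsteps i ?_)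
    · exact Finset.mem_Icc.2 ⟨by omega, le_rfl⟩
    · exact Finset.Icc_subset_Icc_right (by omega) hi

theorem norm_euler_sub_zero_le (hT : ∀ x y, ‖T x - T y‖ ≤ ‖x - y‖) {hs : ℕ → ℝ} {zs : ℕ → Z}
    (hz : ∀ j, zs (j + 1) = eulerStep T (hs (j + 1)) (zs j)) {j : ℕ}
    (hsteps : ∀ i ∈ Finset.Icc 1 j, hs i ∈ Icc 0 1) :
    ‖zs j - zs 0‖ ≤ ‖zs 0 - T (zs 0)‖ * ∑ i ∈ Finset.Icc 1 j, hs i := by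
  induction j with
  | zero => simp
  | succ j ih =>
    have hlast : hs (j + 1) ∈ Icc 0 1 := hsteps _ (Finset.mem_Icc.2 ⟨by omega, le_rfl⟩)
    have hprev : ∀ i ∈ Finset.Icc 1 j, hs i ∈ Icc 0 1 := fun i hi =>
      hsteps i (Finset.Icc_subset_Icc_right (by omega) hi)
    calc ‖zs (j + 1) - zs 0‖ ≤ ‖zs (j + 1) - zs j‖ + ‖zs j - zs 0‖ :=
          norm_sub_le_norm_sub_add_norm_sub _ _ _
      _ ≤ hs (j + 1) * ‖zs 0 - T (zs 0)‖ + ‖zs 0 - T (zs 0)‖ * ∑ i ∈ Finset.Icc 1 j, hs i := by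
        rw [hz, eulerStep_sub_self, norm_smul, Real.norm_of_nonneg hlast.1, norm_sub_rev]
        exact add_le_add (mul_le_mul_of_nonneg_left (norm_euler_sub_apply_le hT hz hprev) hlast.1)
          (ih hprev)
      _ = ‖zs 0 - T (zs 0)‖ * ∑ i ∈ Finset.Icc 1 (j + 1), hs i := by
        rw [Finset.sum_Icc_succ_top (by omega)]; ring

def IsEvolutionSolution (T : Z → Z) (f : ℝ → Z) : Prop :=
  ∀ s, 0 ≤ s → HasDerivAt f (T (f s) - f s) s

namespace IsEvolutionSolution

theorem comp_add_const (hf : IsEvolutionSolution T f) {δ : ℝ} (hδ : 0 ≤ δ) :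
    IsEvolutionSolution T (fun s => f (s + δ)) := fun s hs =>
  (hf (s + δ) (add_nonneg hs hδ)).comp_add_const s δ

theorem norm_sub_le (hT : ∀ x y, ‖T x - T y‖ ≤ ‖x - y‖) (hf : IsEvolutionSolution T f)
    (hg : IsEvolutionSolution T g) {s : ℝ} (hs : 0 ≤ s) : ‖f s - g s‖ ≤ ‖f 0 - g 0‖ := by
  set v : ℝ → Z := fun u => Real.exp u • (f u - g u)
  have hv : ∀ u, 0 ≤ u → HasDerivAt v (Real.exp u • (T (f u) - T (g u))) u := fun u hu =>
    ((Real.hasDerivAt_exp u).smul ((hf u hu).sub (hg u hu))).congr_deriv (by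
      rw [← smul_add, Pi.sub_apply]; congr 1; abel)
  have hnorm : ∀ u (x : Z), ‖Real.exp u • x‖ = Real.exp u * ‖x‖ := fun u x => by
    rw [norm_smul, Real.norm_of_nonneg (Real.exp_pos u).le]
  have key := norm_le_gronwallBound_of_norm_deriv_right_le (K := 1) (ε := 0)
    (fun u hu => (hv u hu.1).continuousAt.continuousWithinAt)
    (fun u hu => (hv u hu.1).hasDerivWithinAt) le_rfl
    (fun u hu => by
      simp only [v, hnorm, one_mul, add_zero]
      exact mul_le_mul_of_nonneg_left (hT _ _) (Real.exp_pos u).le) s ⟨hs, le_rfl⟩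
  simp only [v, hnorm, gronwallBound_ε0, Real.exp_zero, one_smul, one_mul, sub_zero] at key
  exact le_of_mul_le_mul_left (by linarith) (Real.exp_pos s)

theorem norm_apply_sub_le (hT : ∀ x y, ‖T x - T y‖ ≤ ‖x - y‖) (hf : IsEvolutionSolution T f)
    {s : ℝ} (hs : 0 ≤ s) : ‖T (f s) - f s‖ ≤ ‖T (f 0) - f 0‖ := by
  refine le_of_tendsto_of_tendsto (hf s hs).tendsto_slope_zero_right.norm
    (hf 0 le_rfl).tendsto_slope_zero_right.norm ?_
  filter_upwards [self_mem_nhdsWithin] with δ (hδ : 0 < δ)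
  rw [norm_smul, norm_smul, zero_add]
  gcongr
  simpa using (hf.comp_add_const hδ.le).norm_sub_le hT hf hs

theorem norm_sub_zero_le (hT : ∀ x y, ‖T x - T y‖ ≤ ‖x - y‖) (hf : IsEvolutionSolution T f)
    {s : ℝ} (hs : 0 ≤ s) : ‖f s - f 0‖ ≤ ‖T (f 0) - f 0‖ * s := by
  simpa using norm_image_sub_le_of_norm_deriv_le_segment'
    (fun u hu => (hf u hu.1).hasDerivWithinAt) (fun u hu => hf.norm_apply_sub_le hT hu.1) s
    ⟨hs, le_rfl⟩

theorem norm_sub_eulerStep_le (hT : ∀ x y, ‖T x - T y‖ ≤ ‖x - y‖)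
    (hf : IsEvolutionSolution T f) {y : Z} {e C A σ : ℝ} (he : e ∈ Icc 0 1) (hC : 0 ≤ C)
    (hA : 0 ≤ A) (hy : ∀ u, 0 ≤ u → ‖f u - y‖ ≤ C * √(A + (u - σ) ^ 2))
    (h0 : ‖f 0 - eulerStep T e y‖ ≤ C * (σ + e)) {s : ℝ} (hs : 0 ≤ s) :
    ‖f s - eulerStep T e y‖ ≤ C * √(A + e ^ 2 + (s - (σ + e)) ^ 2) := by
  rcases he.1.eq_or_lt with rfl | he0
  · simpa [eulerStep_zero] using hy s hs
  set P : ℝ → ℝ := fun u => A + e ^ 2 + (u - (σ + e)) ^ 2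
  have hP : ∀ u, 0 < P u := fun u => by positivity
  have hB : ∀ u, HasDerivAt (fun u => C * √(P u)) (C * ((u - (σ + e)) / √(P u))) u := fun u => by
    have hP' : HasDerivAt P (2 * (u - (σ + e))) u :=
      ((((hasDerivAt_id u).sub_const (σ + e)).pow 2).const_add (A + e ^ 2)).congr_deriv (by simp)
    exact ((hP'.sqrt (hP u).ne').const_mul C).congr_deriv (by field_simp)
  refine norm_le_of_norm_add_smul_deriv_le (φ := fun u => f u - eulerStep T e y) he0
    (fun u hu => (hf u hu.1).continuousAt.continuousWithinAt.sub continuousWithinAt_const)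
    (fun u hu => ((hf u hu.1).sub_const _).hasDerivWithinAt) hB ?_ ?_ ⟨hs, le_rfl⟩
  · refine h0.trans (mul_le_mul_of_nonneg_left (Real.le_sqrt_of_sq_le ?_) hC)
    nlinarith [hP 0]
  · intro u hu
    set x := u - (σ + e)
    have hcombo : f u - eulerStep T e y + e • (T (f u) - f u)
        = (1 - e) • (f u - y) + e • (T (f u) - T y) := by
      unfold eulerStep; module
    calc ‖f u - eulerStep T e y + e • (T (f u) - f u)‖
        ≤ (1 - e) * ‖f u - y‖ + e * ‖f u - y‖ := by
          rw [hcombo]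
          refine (norm_add_le _ _).trans (add_le_add ?_ ?_) <;>
            rw [norm_smul, Real.norm_of_nonneg (by linarith [he.2])]
          exact mul_le_mul_of_nonneg_left (hT _ _) he.1
      _ ≤ C * √(A + (x + e) ^ 2) := by
          rw [show x + e = u - σ by ring]
          linarith [hy u hu.1]
      _ ≤ C * (√(P u) + e * x / √(P u)) :=
          mul_le_mul_of_nonneg_left (sqrt_add_add_sq_le hA x he0.ne') hC
      _ = C * √(P u) + e * (C * (x / √(P u))) := by ring

theorem norm_sub_euler_le (hT : ∀ x y, ‖T x - T y‖ ≤ ‖x - y‖)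
    (hf : IsEvolutionSolution T f) {hs : ℕ → ℝ} {zs : ℕ → Z} (hz0 : zs 0 = f 0)
    (hz : ∀ j, zs (j + 1) = eulerStep T (hs (j + 1)) (zs j)) {j : ℕ}
    (hsteps : ∀ i ∈ Finset.Icc 1 j, hs i ∈ Icc 0 1) {u : ℝ} (hu : 0 ≤ u) :
    ‖f u - zs j‖ ≤ ‖f 0 - T (f 0)‖ *
      √(∑ i ∈ Finset.Icc 1 j, hs i ^ 2 + (u - ∑ i ∈ Finset.Icc 1 j, hs i) ^ 2) := by
  induction j generalizing u with
  | zero =>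
    simpa [hz0, Real.sqrt_sq hu, norm_sub_rev (f 0), mul_comm] using hf.norm_sub_zero_le hT hu
  | succ j ih =>
    have hprev : ∀ i ∈ Finset.Icc 1 j, hs i ∈ Icc 0 1 := fun i hi =>
      hsteps i (Finset.Icc_subset_Icc_right (by omega) hi)
    have h0 : ‖f 0 - zs (j + 1)‖ ≤
        ‖f 0 - T (f 0)‖ * (∑ i ∈ Finset.Icc 1 j, hs i + hs (j + 1)) := by
      rw [← Finset.sum_Icc_succ_top (by omega), norm_sub_rev, ← hz0]
      exact norm_euler_sub_zero_le hT hz hsteps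
    rw [Finset.sum_Icc_succ_top (by omega), Finset.sum_Icc_succ_top (by omega), hz]
    rw [hz] at h0
    exact hf.norm_sub_eulerStep_le hT (hsteps _ (Finset.mem_Icc.2 ⟨by omega, le_rfl⟩))
      (norm_nonneg _) (Finset.sum_nonneg fun i _ => sq_nonneg (hs i)) (fun _ hv => ih hprev hv)
      h0 hu

end IsEvolutionSolution

end

theorem eulerian_scheme_mesh_bound_general
    {Z : Type*} [NormedAddCommGroup Z] [NormedSpace ℝ Z]
    (T : Z → Z) (hT : ∀ x y : Z, ‖T x - T y‖ ≤ ‖x - y‖)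
    (h : ℝ) (hh : h ∈ Set.Ioc (0 : ℝ) 1)
    (k : ℕ) (hs : ℕ → ℝ)
    (hbound : ∀ i ∈ Finset.Icc 1 k, 0 ≤ hs i ∧ hs i ≤ h)
    (t : ℝ) (hsum : ∑ i ∈ Finset.Icc 1 k, hs i = t)
    (z : Z) (zs : ℕ → Z) (hz0 : zs 0 = z)
    (hz : ∀ j, zs (j + 1) = (1 - hs (j + 1)) • zs j + hs (j + 1) • T (zs j))
    (f : ℝ → Z) (hf0 : f 0 = z)
    (hf : ∀ s : ℝ, 0 ≤ s → HasDerivAt f (T (f s) - f s) s) :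
    ‖f t - zs k‖ ≤ ‖z - T z‖ * Real.sqrt (h * t) := by
  have ht : 0 ≤ t := hsum ▸ Finset.sum_nonneg fun i hi => (hbound i hi).1
  have hsq : ∑ i ∈ Finset.Icc 1 k, hs i ^ 2 ≤ h * t := by
    rw [← hsum, Finset.mul_sum]
    exact Finset.sum_le_sum fun i hi => by
      rw [sq]; exact mul_le_mul_of_nonneg_right (hbound i hi).2 (hbound i hi).1
  have key := IsEvolutionSolution.norm_sub_euler_le hT hf (hz0.trans hf0.symm) hz
    (fun i hi => ⟨(hbound i hi).1, (hbound i hi).2.trans hh.2⟩) ht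
  rw [hsum, sub_self, zero_pow two_ne_zero, add_zero, hf0] at key
  exact key.trans (mul_le_mul_of_nonneg_left (Real.sqrt_le_sqrt hsq) (norm_nonneg _))

/-- If the step sizes `h_1, …, h_k` are bounded by `h ∈ (0,1]` and sum to `t`,
then the Eulerian scheme started at `z` satisfies
`‖f t - z_k‖ ≤ ‖z - T z‖ √(h t)` where `f` solves `ḟ = (T - Id) f`, `f 0 = z`. -/
theorem eulerian_scheme_mesh_bound
    {Z : Type*} [NormedAddCommGroup Z] [NormedSpace ℝ Z] [CompleteSpace Z]
    (T : Z → Z) (hT : ∀ x y : Z, ‖T x - T y‖ ≤ ‖x - y‖)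
    (h : ℝ) (hh : h ∈ Set.Ioc (0 : ℝ) 1)
    (k : ℕ) (hs : ℕ → ℝ)
    (hbound : ∀ i ∈ Finset.Icc 1 k, 0 ≤ hs i ∧ hs i ≤ h)
    (t : ℝ) (hsum : ∑ i ∈ Finset.Icc 1 k, hs i = t)
    (z : Z) (zs : ℕ → Z) (hz0 : zs 0 = z)
    (hz : ∀ j, zs (j + 1) = (1 - hs (j + 1)) • zs j + hs (j + 1) • T (zs j))
    (f : ℝ → Z) (hf0 : f 0 = z)
    (hf : ∀ s : ℝ, 0 ≤ s → HasDerivAt f (T (f s) - f s) s) :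
    ‖f t - zs k‖ ≤ ‖z - T z‖ * Real.sqrt (h * t) :=
  eulerian_scheme_mesh_bound_general T hT h hh k hs hbound t hsum z zs hz0 hz f hf0 hf
end

section
/- For all λ, μ ∈ (0,1], ‖w_λ − w_μ‖ ≤ 2·|1 − λ/μ|·‖T(0)‖. -/
/-!
Comparing `W_μ = T ((1 - μ) • W_μ)` with `T 0` gives `μ ‖W_μ‖ ≤ ‖T 0‖`; comparing the two fixed-point
equations with each other gives `λ ‖W_λ - W_μ‖ ≤ |λ - μ| ‖W_μ‖`. Splitting
`λ • W_λ - μ • W_μ = λ • (W_λ - W_μ) + (λ - μ) • W_μ` then yields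
`‖w_λ - w_μ‖ ≤ 2 |λ - μ| ‖W_μ‖ ≤ 2 |λ - μ| / μ · ‖T 0‖`.
-/

theorem norm_smul_sub_smul_le {E : Type*} [SeminormedAddCommGroup E] [NormedSpace ℝ E]
    {a b : ℝ} (ha : 0 ≤ a) (x y : E) :
    ‖a • x - b • y‖ ≤ a * ‖x - y‖ + |a - b| * ‖y‖ := by
  calc ‖a • x - b • y‖ = ‖a • (x - y) + (a - b) • y‖ := by congr 1; module
    _ ≤ ‖a • (x - y)‖ + ‖(a - b) • y‖ := norm_add_le _ _
    _ = a * ‖x - y‖ + |a - b| * ‖y‖ := by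
      rw [norm_smul, norm_smul, Real.norm_of_nonneg ha, Real.norm_eq_abs]

namespace LipschitzWith

variable {E : Type*} [SeminormedAddCommGroup E] [NormedSpace ℝ E] {T : E → E}

theorem mul_norm_le_norm_apply_zero_of_apply_smul_eq (hT : LipschitzWith 1 T) {m : ℝ}
    (hm : m ≤ 1) {W : E} (hW : T ((1 - m) • W) = W) : m * ‖W‖ ≤ ‖T 0‖ := by
  have : ‖W‖ ≤ (1 - m) * ‖W‖ + ‖T 0‖ :=
    calc ‖W‖ = ‖T ((1 - m) • W)‖ := by rw [hW]
      _ ≤ ‖T ((1 - m) • W) - T 0‖ + ‖T 0‖ := norm_le_norm_sub_add _ _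
      _ ≤ ‖(1 - m) • W - 0‖ + ‖T 0‖ := by
        grw [hT.norm_sub_le, NNReal.coe_one, one_mul]
      _ = (1 - m) * ‖W‖ + ‖T 0‖ := by
        rw [sub_zero, norm_smul, Real.norm_of_nonneg (by linarith)]
  linarith

theorem mul_norm_sub_le_of_apply_smul_eq (hT : LipschitzWith 1 T) {l m : ℝ} (hl : l ≤ 1)
    {Wl Wm : E} (hWl : T ((1 - l) • Wl) = Wl) (hWm : T ((1 - m) • Wm) = Wm) :
    l * ‖Wl - Wm‖ ≤ |l - m| * ‖Wm‖ := by
  have : ‖Wl - Wm‖ ≤ (1 - l) * ‖Wl - Wm‖ + |l - m| * ‖Wm‖ :=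
    calc ‖Wl - Wm‖ = ‖T ((1 - l) • Wl) - T ((1 - m) • Wm)‖ := by rw [hWl, hWm]
      _ ≤ ‖(1 - l) • Wl - (1 - m) • Wm‖ := by
        grw [hT.norm_sub_le, NNReal.coe_one, one_mul]
      _ ≤ (1 - l) * ‖Wl - Wm‖ + |(1 - l) - (1 - m)| * ‖Wm‖ :=
        norm_smul_sub_smul_le (by linarith) _ _
      _ = (1 - l) * ‖Wl - Wm‖ + |l - m| * ‖Wm‖ := by
        rw [sub_sub_sub_cancel_left, abs_sub_comm]
  linarith

theorem norm_smul_sub_smul_le_of_apply_smul_eq (hT : LipschitzWith 1 T) {l m : ℝ}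
    (hl : l ∈ Set.Icc (0 : ℝ) 1) {Wl Wm : E} (hWl : T ((1 - l) • Wl) = Wl)
    (hWm : T ((1 - m) • Wm) = Wm) :
    ‖l • Wl - m • Wm‖ ≤ 2 * |l - m| * ‖Wm‖ := by
  have := hT.mul_norm_sub_le_of_apply_smul_eq hl.2 hWl hWm
  linarith [norm_smul_sub_smul_le (b := m) hl.1 Wl Wm]

end LipschitzWith

theorem discounted_values_lipschitz_general
    {Z : Type*} [NormedAddCommGroup Z] [NormedSpace ℝ Z]
    (T : Z → Z) (hT : ∀ x y : Z, ‖T x - T y‖ ≤ ‖x - y‖)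
    (lam mu : ℝ) (hlam : lam ∈ Set.Ioc (0 : ℝ) 1) (hmu : mu ∈ Set.Ioc (0 : ℝ) 1)
    (Wl : Z) (hWl : T ((1 - lam) • Wl) = Wl)
    (Wm : Z) (hWm : T ((1 - mu) • Wm) = Wm) :
    ‖lam • Wl - mu • Wm‖ ≤ 2 * |1 - lam / mu| * ‖T 0‖ := by
  have hT' : LipschitzWith 1 T :=
    .of_dist_le_mul fun x y => by simpa [dist_eq_norm] using hT x y
  have hWm_le : mu * ‖Wm‖ ≤ ‖T 0‖ := hT'.mul_norm_le_norm_apply_zero_of_apply_smul_eq hmu.2 hWm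
  have hdiff : |lam - mu| = |1 - lam / mu| * mu :=
    calc |lam - mu| = |(1 - lam / mu) * mu| := by
          rw [sub_mul, one_mul, div_mul_cancel₀ _ hmu.1.ne', abs_sub_comm]
      _ = |1 - lam / mu| * mu := by rw [abs_mul, abs_of_pos hmu.1]
  calc ‖lam • Wl - mu • Wm‖ ≤ 2 * |lam - mu| * ‖Wm‖ :=
        hT'.norm_smul_sub_smul_le_of_apply_smul_eq (Set.Ioc_subset_Icc_self hlam) hWl hWm
    _ = 2 * |1 - lam / mu| * (mu * ‖Wm‖) := by rw [hdiff]; ring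
    _ ≤ 2 * |1 - lam / mu| * ‖T 0‖ := by gcongr

/-- For `λ, μ ∈ (0,1]` with corresponding fixed points `W_λ`, `W_μ` of
`x ↦ T((1-λ) x)` resp. `x ↦ T((1-μ) x)`, one has
`‖w_λ - w_μ‖ ≤ 2 |1 - λ/μ| ‖T 0‖`. -/
theorem discounted_values_lipschitz
    {Z : Type*} [NormedAddCommGroup Z] [NormedSpace ℝ Z] [CompleteSpace Z]
    (T : Z → Z) (hT : ∀ x y : Z, ‖T x - T y‖ ≤ ‖x - y‖)
    (lam mu : ℝ) (hlam : lam ∈ Set.Ioc (0 : ℝ) 1) (hmu : mu ∈ Set.Ioc (0 : ℝ) 1)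
    (Wl : Z) (hWl : T ((1 - lam) • Wl) = Wl)
    (Wm : Z) (hWm : T ((1 - mu) • Wm) = Wm) :
    ‖lam • Wl - mu • Wm‖ ≤ 2 * |1 - lam / mu| * ‖T 0‖ :=
  discounted_values_lipschitz_general T hT lam mu hlam hmu Wl hWl Wm hWm
end

section
/- For all λ ∈ (0,1] and h ∈ (0,1], w_λ^h = w_μ where μ = λ/(1 + λ − λ·h). (Note μ ∈ (0,1].) -/
/-!
Put `x := (1 - λh) W_λ^h` and `y := T x`. The fixed-point equation of `W_λ^h` reads
`W_λ^h = (1 - h) x + h y`; scaling by `1 - λh` and solving for `x` gives `x = (1 - μ) y`,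
since `1 - (1 - h)(1 - λh) = h (1 + λ - λh)`. Hence `y = T((1 - μ) y)`, so `y = W_μ` by
uniqueness of the fixed point of a contraction, and `λ W_λ^h = μ y` is one more linear step.
-/

section

variable {Z : Type*} [NormedAddCommGroup Z] [NormedSpace ℝ Z]

theorem eq_of_apply_smul_eq_of_nonexpansive {T : Z → Z}
    (hT : ∀ x y : Z, ‖T x - T y‖ ≤ ‖x - y‖) {c : ℝ} (hc : |c| < 1) {a b : Z}
    (ha : T (c • a) = a) (hb : T (c • b) = b) : a = b := by
  have hle : ‖a - b‖ ≤ |c| * ‖a - b‖ :=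
    calc ‖a - b‖ = ‖T (c • a) - T (c • b)‖ := by rw [ha, hb]
      _ ≤ ‖c • a - c • b‖ := hT _ _
      _ = |c| * ‖a - b‖ := by rw [← smul_sub, norm_smul, Real.norm_eq_abs]
  have hzero : ‖a - b‖ = 0 := by nlinarith [norm_nonneg (a - b), abs_nonneg c]
  exact sub_eq_zero.mp (norm_eq_zero.mp hzero)

variable {lam h μ : ℝ} {W y : Z}

theorem one_sub_mul_smul_eq_of_relaxed_eq (hh : h ≠ 0) (hμ : μ * (1 + lam - lam * h) = lam)
    (hW : (1 - h) • ((1 - lam * h) • W) + h • y = W) :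
    (1 - lam * h) • W = (1 - μ) • y := by
  linear_combination (norm := match_scalars) (-(1 - μ) / h) • hW
  · field_simp
    linear_combination h * hμ
  · field_simp
    ring

theorem smul_eq_smul_of_relaxed_eq (hh : h ≠ 0) (hμ : μ * (1 + lam - lam * h) = lam)
    (hW : (1 - h) • ((1 - lam * h) • W) + h • y = W) :
    lam • W = μ • y := by
  linear_combination (norm := match_scalars) (-μ / h) • hW
  · field_simp
    linear_combination -h * hμ
  · field_simp
    ring

end

theorem discounted_value_stage_duration_general
    {Z : Type*} [NormedAddCommGroup Z] [NormedSpace ℝ Z]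
    (T : Z → Z) (hT : ∀ x y : Z, ‖T x - T y‖ ≤ ‖x - y‖)
    (lam h : ℝ) (hlam : lam ∈ Set.Ioc (0 : ℝ) 1) (hh : h ∈ Set.Ioc (0 : ℝ) 1)
    (Wlh : Z)
    (hWlh : (1 - h) • ((1 - lam * h) • Wlh) + h • T ((1 - lam * h) • Wlh) = Wlh)
    (Wmu : Z)
    (hWmu : T ((1 - lam / (1 + lam - lam * h)) • Wmu) = Wmu) :
    lam • Wlh = (lam / (1 + lam - lam * h)) • Wmu := by
  obtain ⟨hlam0, hlam1⟩ := hlam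
  obtain ⟨hh0, hh1⟩ := hh
  set μ := lam / (1 + lam - lam * h)
  have hD : lam ≤ 1 + lam - lam * h := by nlinarith
  have hμ : μ * (1 + lam - lam * h) = lam := div_mul_cancel₀ _ (by linarith)
  have hμ_mem : μ ∈ Set.Ioc (0 : ℝ) 1 :=
    ⟨div_pos hlam0 (by linarith), (div_le_one (by linarith)).mpr hD⟩
  have hcontr : |1 - μ| < 1 := by
    rw [abs_lt]
    constructor <;> linarith [hμ_mem.1, hμ_mem.2]
  have hfix : T ((1 - μ) • T ((1 - lam * h) • Wlh)) = T ((1 - lam * h) • Wlh) := by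
    rw [← one_sub_mul_smul_eq_of_relaxed_eq hh0.ne' hμ hWlh]
  rw [smul_eq_smul_of_relaxed_eq hh0.ne' hμ hWlh,
    eq_of_apply_smul_eq_of_nonexpansive hT hcontr hfix hWmu]

/-- Identification of the `λ`-discounted value of `T_h = (1-h) Id + h T` with
the `μ`-discounted value of `T`, where `μ = λ/(1 + λ - λ h)`:
if `W_λ^h` is the fixed point of `u ↦ T_h((1 - λ h) u)` and `W_μ` is the fixed
point of `x ↦ T((1 - μ) x)`, then `λ • W_λ^h = μ • W_μ`. -/
theorem discounted_value_stage_duration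
    {Z : Type*} [NormedAddCommGroup Z] [NormedSpace ℝ Z] [CompleteSpace Z]
    (T : Z → Z) (hT : ∀ x y : Z, ‖T x - T y‖ ≤ ‖x - y‖)
    (lam h : ℝ) (hlam : lam ∈ Set.Ioc (0 : ℝ) 1) (hh : h ∈ Set.Ioc (0 : ℝ) 1)
    (Wlh : Z)
    (hWlh : (1 - h) • ((1 - lam * h) • Wlh) + h • T ((1 - lam * h) • Wlh) = Wlh)
    (Wmu : Z)
    (hWmu : T ((1 - lam / (1 + lam - lam * h)) • Wmu) = Wmu) :
    lam • Wlh = (lam / (1 + lam - lam * h)) • Wmu :=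
  discounted_value_stage_duration_general T hT lam h hlam hh Wlh hWlh Wmu hWmu
end

section
/- For all λ, h ∈ (0,1], ‖w_λ^h − w_{λ/(1+λ)}‖ ≤ 2·‖T(0)‖·λ·h. -/
/-!
Write `c = 1 - λh` and `V = (1 + λ)⁻¹ • W_{λ/(1+λ)}`. The two fixed-point equations say
`T (c • W_λ^h) = (c + λ) • W_λ^h` and `T V = (1 + λ) • V`, and the claim is
`λ ‖W_λ^h - V‖ ≤ 2 ‖T 0‖ λ h`. Applying nonexpansiveness to the pair `c • W_λ^h, V` gives
`(c + λ) ‖W_λ^h - V‖ ≤ 2 λ h ‖V‖`, while `λ ‖V‖ ≤ ‖T 0‖` by comparing `V` with `0`;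
since `c + λ ≥ 1`, multiplying the first bound by `λ` and inserting the second concludes.
-/

section Nonexpansive

variable {Z : Type*} [NormedAddCommGroup Z] [NormedSpace ℝ Z] {T : Z → Z}

theorem mul_norm_le_norm_apply_zero_of_apply_eq_smul
    (hT : ∀ x y : Z, ‖T x - T y‖ ≤ ‖x - y‖) {lam : ℝ} (hlam : 0 ≤ lam) {V : Z}
    (hV : T V = (1 + lam) • V) : lam * ‖V‖ ≤ ‖T 0‖ := by
  have h : (1 + lam) * ‖V‖ ≤ ‖V‖ + ‖T 0‖ :=
    calc (1 + lam) * ‖V‖ = ‖T V‖ := by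
          rw [hV, norm_smul, Real.norm_of_nonneg (by linarith)]
      _ ≤ ‖T V - T 0‖ + ‖T 0‖ := norm_le_norm_sub_add _ _
      _ ≤ ‖V‖ + ‖T 0‖ := by simpa using add_le_add_right (hT V 0) ‖T 0‖
  linarith

theorem norm_apply_sub_apply_le_of_apply_eq_smul
    (hT : ∀ x y : Z, ‖T x - T y‖ ≤ ‖x - y‖) {c lam : ℝ} (hc0 : 0 ≤ c) (hc1 : c ≤ 1)
    (hlam : 0 < lam) {U V : Z} (hU : T (c • U) = (c + lam) • U)
    (hV : T V = (1 + lam) • V) : ‖T (c • U) - T V‖ ≤ (1 - c) * ‖V‖ := by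
  set d := T (c • U) - T V
  have hsplit : (c + lam) • (c • U - V) = c • d - (lam * (1 - c)) • V := by
    simp only [d, hU, hV]
    module
  have hd : ‖d‖ ≤ ‖c • U - V‖ := hT _ _
  have h : (c + lam) * ‖c • U - V‖ ≤ c * ‖d‖ + lam * (1 - c) * ‖V‖ := by
    calc (c + lam) * ‖c • U - V‖ = ‖(c + lam) • (c • U - V)‖ := by
          rw [norm_smul, Real.norm_of_nonneg (by linarith)]
      _ ≤ ‖c • d‖ + ‖(lam * (1 - c)) • V‖ := hsplit ▸ norm_sub_le _ _
      _ = c * ‖d‖ + lam * (1 - c) * ‖V‖ := by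
          rw [norm_smul, norm_smul, Real.norm_of_nonneg hc0,
            Real.norm_of_nonneg (mul_nonneg hlam.le (by linarith))]
  have : lam * ‖d‖ ≤ lam * ((1 - c) * ‖V‖) := by
    nlinarith [mul_le_mul_of_nonneg_left hd (by linarith : 0 ≤ c + lam)]
  exact le_of_mul_le_mul_left this hlam

theorem mul_norm_sub_le_of_apply_eq_smul
    (hT : ∀ x y : Z, ‖T x - T y‖ ≤ ‖x - y‖) {c lam : ℝ} (hc0 : 0 ≤ c) (hc1 : c ≤ 1)
    (hlam : 0 < lam) {U V : Z} (hU : T (c • U) = (c + lam) • U)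
    (hV : T V = (1 + lam) • V) : (c + lam) * ‖U - V‖ ≤ 2 * (1 - c) * ‖V‖ := by
  have hsplit : (c + lam) • (U - V) = (T (c • U) - T V) + (1 - c) • V := by
    rw [hU, hV]
    module
  calc (c + lam) * ‖U - V‖ = ‖(c + lam) • (U - V)‖ := by
        rw [norm_smul, Real.norm_of_nonneg (by linarith)]
    _ ≤ ‖T (c • U) - T V‖ + ‖(1 - c) • V‖ := hsplit ▸ norm_add_le _ _
    _ ≤ (1 - c) * ‖V‖ + (1 - c) * ‖V‖ := by
        rw [norm_smul, Real.norm_of_nonneg (by linarith)]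
        gcongr
        exact norm_apply_sub_apply_le_of_apply_eq_smul hT hc0 hc1 hlam hU hV
    _ = 2 * (1 - c) * ‖V‖ := by ring

end Nonexpansive

theorem discounted_value_vanishing_duration_general
    {Z : Type*} [NormedAddCommGroup Z] [NormedSpace ℝ Z]
    (T : Z → Z) (hT : ∀ x y : Z, ‖T x - T y‖ ≤ ‖x - y‖)
    (lam h : ℝ) (hlam : lam ∈ Set.Ioc (0 : ℝ) 1) (hh : h ∈ Set.Ioc (0 : ℝ) 1)
    (Wlh : Z)
    (hWlh : (1 - h) • ((1 - lam * h) • Wlh) + h • T ((1 - lam * h) • Wlh) = Wlh)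
    (Wm : Z) (hWm : T ((1 - lam / (1 + lam)) • Wm) = Wm) :
    ‖lam • Wlh - (lam / (1 + lam)) • Wm‖ ≤ 2 * ‖T 0‖ * lam * h := by
  obtain ⟨hlam0, hlam1⟩ := hlam
  obtain ⟨hh0, hh1⟩ := hh
  have hlamh : lam * h ≤ 1 := by nlinarith
  have hlam_ne : (1 + lam) ≠ 0 := by positivity
  set V := (1 + lam)⁻¹ • Wm
  have hU : T ((1 - lam * h) • Wlh) = (1 - lam * h + lam) • Wlh := by
    refine smul_right_injective Z hh0.ne' ?_
    dsimp only
    rw [← sub_eq_of_eq_add' hWlh.symm]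
    module
  have hV : T V = (1 + lam) • V := by
    have hcoef : 1 - lam / (1 + lam) = (1 + lam)⁻¹ := by field_simp; ring
    rw [hcoef] at hWm
    rw [smul_inv_smul₀ hlam_ne, hWm]
  have hUV := mul_norm_sub_le_of_apply_eq_smul hT (by linarith)
    (sub_le_self _ (by positivity)) hlam0 hU hV
  have hVT := mul_norm_le_norm_apply_zero_of_apply_eq_smul hT hlam0.le hV
  have hdiff : lam • Wlh - (lam / (1 + lam)) • Wm = lam • (Wlh - V) := by
    simp only [V]
    module
  rw [hdiff, norm_smul, Real.norm_of_nonneg hlam0.le]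
  have hs : 1 ≤ 1 - lam * h + lam := by nlinarith
  calc lam * ‖Wlh - V‖ ≤ lam * ((1 - lam * h + lam) * ‖Wlh - V‖) := by
        gcongr
        exact le_mul_of_one_le_left (norm_nonneg _) hs
    _ ≤ lam * (2 * (1 - (1 - lam * h)) * ‖V‖) := by gcongr
    _ = 2 * lam * h * (lam * ‖V‖) := by ring
    _ ≤ 2 * lam * h * ‖T 0‖ := by gcongr
    _ = 2 * ‖T 0‖ * lam * h := by ring

/-- For `λ, h ∈ (0,1]`, `‖w_λ^h - w_{λ/(1+λ)}‖ ≤ 2 ‖T 0‖ λ h`, where `W_λ^h` is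
the fixed point of `u ↦ T_h((1 - λ h) u)` with `T_h = (1-h) Id + h T`,
`w_λ^h = λ • W_λ^h`, and `W_{λ/(1+λ)}` is the fixed point of
`x ↦ T((1 - λ/(1+λ)) x)`, `w_{λ/(1+λ)} = (λ/(1+λ)) • W_{λ/(1+λ)}`. -/
theorem discounted_value_vanishing_duration
    {Z : Type*} [NormedAddCommGroup Z] [NormedSpace ℝ Z] [CompleteSpace Z]
    (T : Z → Z) (hT : ∀ x y : Z, ‖T x - T y‖ ≤ ‖x - y‖)
    (lam h : ℝ) (hlam : lam ∈ Set.Ioc (0 : ℝ) 1) (hh : h ∈ Set.Ioc (0 : ℝ) 1)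
    (Wlh : Z)
    (hWlh : (1 - h) • ((1 - lam * h) • Wlh) + h • T ((1 - lam * h) • Wlh) = Wlh)
    (Wm : Z) (hWm : T ((1 - lam / (1 + lam)) • Wm) = Wm) :
    ‖lam • Wlh - (lam / (1 + lam)) • Wm‖ ≤ 2 * ‖T 0‖ * lam * h :=
  discounted_value_vanishing_duration_general T hT lam h hlam hh Wlh hWlh Wm hWm
end

section
/- Let λ ∈ (0,1], let z ∈ Z, and let h_1, …, h_n ∈ (0,1]. Then ‖(D_λ^{h_1} ∘ D_λ^{h_2} ∘ ⋯ ∘ D_λ^{h_n})(z) − w_{λ/(1+λ)}‖ ≤ 2·‖T(0)‖·max_{1 ≤ i ≤ n} h_i + (‖T(0)‖ + ‖z‖)·Π_{i=1}^n (1 − λ·h_i). -/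
/-!
Put `μ := λ/(1+λ)` and `w := w_μ`. The fixed-point equation defining `w` reads `λ • T (λ⁻¹ • w) = (1 + λ) • w`,
and it makes `w` an approximate fixed point of every `D_λ^h`: `‖D_λ^h w - w‖ ≤ 2 λ h² ‖w‖`.
Since `D_λ^h` is a `(1 - λh)`-contraction, each step gives
`‖D_λ^h x - w‖ ≤ (1 - λh) ‖x - w‖ + 2 λ h² ‖w‖`, and unrolling this recursion along the composition
bounds the accumulated error by `2 ‖w‖ max_i h_i`, because `(1 - λh) M + λh · h ≤ max h M`.
Finally `‖w‖ ≤ ‖T 0‖`: with `w = μ • W` and `W = T ((1 - μ) • W)`, the point `W` lies within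
`(1 - μ) ‖W‖` of `T 0`.
-/

open List

theorem apply_foldr_le_of_step {X : Type*} (f : ℝ → X → X) (e : X → ℝ) {a c : ℝ} (hc : 0 ≤ c)
    (hs : List ℝ) (hmem : ∀ h ∈ hs, 0 ≤ a * h ∧ a * h ≤ 1)
    (hstep : ∀ h ∈ hs, ∀ x, e (f h x) ≤ (1 - a * h) * e x + a * h ^ 2 * c) (z : X) :
    e (hs.foldr f z) ≤ c * hs.foldr max 0 + (hs.map fun h => 1 - a * h).prod * e z := by
  induction hs with
  | nil => simp
  | cons h t ih =>
    obtain ⟨hah0, hah1⟩ := hmem h mem_cons_self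
    have ih' := ih (fun k hk => hmem k (mem_cons_of_mem h hk))
      (fun k hk => hstep k (mem_cons_of_mem h hk))
    simp only [foldr_cons, map_cons, prod_cons]
    set M := t.foldr max 0
    have hconvex : (1 - a * h) * M + a * h * h ≤ max h M := by
      nlinarith [mul_le_mul_of_nonneg_left (le_max_right h M) (sub_nonneg.2 hah1),
        mul_le_mul_of_nonneg_left (le_max_left h M) hah0]
    calc e (f h (t.foldr f z))
        ≤ (1 - a * h) * e (t.foldr f z) + a * h ^ 2 * c := hstep h mem_cons_self _
      _ ≤ (1 - a * h) * (c * M + (t.map fun h => 1 - a * h).prod * e z) + a * h ^ 2 * c := by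
        gcongr
      _ ≤ c * max h M + (1 - a * h) * (t.map fun h => 1 - a * h).prod * e z := by
        nlinarith [mul_le_mul_of_nonneg_left hconvex hc]

theorem one_sub_norm_mul_norm_le_of_apply_smul_eq {𝕜 E : Type*} [NormedField 𝕜]
    [NormedAddCommGroup E] [NormedSpace 𝕜 E] {S : E → E} (hS : ∀ x y : E, ‖S x - S y‖ ≤ ‖x - y‖)
    {c : 𝕜} {W : E} (hW : S (c • W) = W) : (1 - ‖c‖) * ‖W‖ ≤ ‖S 0‖ := by
  have h := hS (c • W) 0
  rw [hW, sub_zero, norm_smul] at h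
  linarith [norm_sub_norm_le W (S 0)]

section Nonexpansive

variable {Z : Type*} [NormedAddCommGroup Z] [NormedSpace ℝ Z] {T : Z → Z}

/-- The relaxation `T_h = (1 - h) Id + h T`. -/
noncomputable def relaxed (T : Z → Z) (h : ℝ) (x : Z) : Z := (1 - h) • x + h • T x

/-- The operator `D_λ^h`. -/
noncomputable def discounted (T : Z → Z) (lam h : ℝ) (x : Z) : Z :=
  lam • relaxed T h (((1 - lam * h) / lam) • x)

theorem smul_apply_inv_smul_eq_of_fixed {lam : ℝ} (hlam : 0 < lam) {W : Z}
    (hW : T ((1 - lam / (1 + lam)) • W) = W) :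
    lam • T (lam⁻¹ • (lam / (1 + lam)) • W) = (1 + lam) • (lam / (1 + lam)) • W := by
  have hshrink : lam⁻¹ * (lam / (1 + lam)) = 1 - lam / (1 + lam) := by field_simp; ring
  rw [smul_smul, hshrink, hW, smul_smul]
  congr 1
  field_simp

variable (hT : ∀ x y : Z, ‖T x - T y‖ ≤ ‖x - y‖)
include hT

theorem norm_relaxed_sub_le {h : ℝ} (h0 : 0 ≤ h) (h1 : h ≤ 1) (x y : Z) :
    ‖relaxed T h x - relaxed T h y‖ ≤ ‖x - y‖ :=
  calc ‖relaxed T h x - relaxed T h y‖ = ‖(1 - h) • (x - y) + h • (T x - T y)‖ := by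
        simp only [relaxed, smul_sub]; abel_nf
    _ ≤ (1 - h) * ‖x - y‖ + h * ‖x - y‖ := by
        refine (norm_add_le _ _).trans ?_
        rw [norm_smul_of_nonneg (by linarith), norm_smul_of_nonneg h0]
        gcongr; exact hT x y
    _ = ‖x - y‖ := by ring

theorem norm_discounted_sub_le {lam h : ℝ} (hlam : 0 < lam) (h0 : 0 ≤ h) (h1 : h ≤ 1)
    (hlh : lam * h ≤ 1) (x y : Z) :
    ‖discounted T lam h x - discounted T lam h y‖ ≤ (1 - lam * h) * ‖x - y‖ := by
  have hcoef : 0 ≤ (1 - lam * h) / lam := div_nonneg (by linarith) hlam.le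
  calc ‖discounted T lam h x - discounted T lam h y‖
      = lam * ‖relaxed T h (((1 - lam * h) / lam) • x)
          - relaxed T h (((1 - lam * h) / lam) • y)‖ := by
        rw [discounted, discounted, ← smul_sub, norm_smul_of_nonneg hlam.le]
    _ ≤ lam * ((1 - lam * h) / lam * ‖x - y‖) := by
        gcongr
        refine (norm_relaxed_sub_le hT h0 h1 _ _).trans_eq ?_
        rw [← smul_sub, norm_smul_of_nonneg hcoef]
    _ = (1 - lam * h) * ‖x - y‖ := by field_simp

theorem norm_discounted_sub_self_le {lam h : ℝ} (hlam : 0 < lam) (h0 : 0 ≤ h) {w : Z}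
    (hw : lam • T (lam⁻¹ • w) = (1 + lam) • w) :
    ‖discounted T lam h w - w‖ ≤ 2 * lam * h ^ 2 * ‖w‖ := by
  set u := T (((1 - lam * h) / lam) • w)
  have hshift : ((1 - lam * h) / lam) • w - lam⁻¹ • w = (-h) • w := by
    rw [← sub_smul]; congr 1; field_simp; ring
  have hdecomp : discounted T lam h w - w
      = (lam * h ^ 2) • w + (lam * h) • (u - T (lam⁻¹ • w)) := by
    have hv : (lam * h) • T (lam⁻¹ • w) = (h * (1 + lam)) • w := by
      rw [mul_comm, ← smul_smul, hw, smul_smul]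
    rw [smul_sub, hv, discounted, relaxed]
    match_scalars
    · field_simp; ring
    · field_simp
  have hu : ‖u - T (lam⁻¹ • w)‖ ≤ h * ‖w‖ := by
    have h := hT (((1 - lam * h) / lam) • w) (lam⁻¹ • w)
    rwa [hshift, norm_smul, norm_neg, Real.norm_of_nonneg h0] at h
  calc ‖discounted T lam h w - w‖
      ≤ lam * h ^ 2 * ‖w‖ + lam * h * ‖u - T (lam⁻¹ • w)‖ := by
        rw [hdecomp]
        refine (norm_add_le _ _).trans_eq ?_
        rw [norm_smul_of_nonneg (by positivity), norm_smul_of_nonneg (by positivity)]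
    _ ≤ lam * h ^ 2 * ‖w‖ + lam * h * (h * ‖w‖) := by gcongr
    _ = 2 * lam * h ^ 2 * ‖w‖ := by ring

theorem norm_discounted_sub_le_of_approx_fixed {lam h : ℝ} (hlam : 0 < lam) (h0 : 0 ≤ h)
    (h1 : h ≤ 1) (hlh : lam * h ≤ 1) {w : Z} (hw : lam • T (lam⁻¹ • w) = (1 + lam) • w) (x : Z) :
    ‖discounted T lam h x - w‖ ≤ (1 - lam * h) * ‖x - w‖ + lam * h ^ 2 * (2 * ‖w‖) :=
  calc ‖discounted T lam h x - w‖
      ≤ ‖discounted T lam h x - discounted T lam h w‖ + ‖discounted T lam h w - w‖ :=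
        norm_sub_le_norm_sub_add_norm_sub _ _ _
    _ ≤ (1 - lam * h) * ‖x - w‖ + 2 * lam * h ^ 2 * ‖w‖ :=
        add_le_add (norm_discounted_sub_le hT hlam h0 h1 hlh x w)
          (norm_discounted_sub_self_le hT hlam h0 hw)
    _ = _ := by ring

theorem norm_smul_le_of_fixed {lam : ℝ} (hlam : 0 < lam) {W : Z}
    (hW : T ((1 - lam / (1 + lam)) • W) = W) : ‖(lam / (1 + lam)) • W‖ ≤ ‖T 0‖ := by
  have hW_norm := one_sub_norm_mul_norm_le_of_apply_smul_eq hT hW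
  have hcoef : 0 ≤ 1 - lam / (1 + lam) := by rw [sub_nonneg, div_le_one (by linarith)]; linarith
  rwa [Real.norm_of_nonneg hcoef, sub_sub_cancel, ← norm_smul_of_nonneg (by positivity)] at hW_norm

end Nonexpansive

theorem composed_discounted_operators_bound_general
    {Z : Type*} [NormedAddCommGroup Z] [NormedSpace ℝ Z]
    (T : Z → Z) (hT : ∀ x y : Z, ‖T x - T y‖ ≤ ‖x - y‖)
    (lam : ℝ) (hlam : lam ∈ Set.Ioc (0 : ℝ) 1)
    (z : Z) (hs : List ℝ)
    (hmem : ∀ hi ∈ hs, hi ∈ Set.Ioc (0 : ℝ) 1)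
    (Wm : Z) (hWm : T ((1 - lam / (1 + lam)) • Wm) = Wm) :
    ‖hs.foldr (fun hi x => lam • ((1 - hi) • (((1 - lam * hi) / lam) • x)
        + hi • T (((1 - lam * hi) / lam) • x))) z
      - (lam / (1 + lam)) • Wm‖
      ≤ 2 * ‖T 0‖ * hs.foldr max 0
        + (‖T 0‖ + ‖z‖) * (hs.map (fun hi => 1 - lam * hi)).prod := by
  obtain ⟨hlam0, hlam1⟩ := hlam
  have hsteps : ∀ h ∈ hs, 0 ≤ lam * h ∧ lam * h ≤ 1 := fun h hh => by
    obtain ⟨h0, h1⟩ := hmem h hh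
    constructor <;> nlinarith
  have hmax : ∀ l : List ℝ, 0 ≤ l.foldr max 0 := fun l => by
    induction l with
    | nil => exact le_rfl
    | cons a t ih => exact le_max_of_le_right ih
  have hprod : 0 ≤ (hs.map fun h => 1 - lam * h).prod :=
    prod_nonneg (by simpa using fun h hh => (hsteps h hh).2)
  set w := (lam / (1 + lam)) • Wm
  have hw := smul_apply_inv_smul_eq_of_fixed hlam0 hWm
  have hwT : ‖w‖ ≤ ‖T 0‖ := norm_smul_le_of_fixed hT hlam0 hWm
  have hbound := apply_foldr_le_of_step (discounted T lam) (fun x => ‖x - w‖)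
    (by positivity : 0 ≤ 2 * ‖w‖) hs hsteps
    (fun h hh => norm_discounted_sub_le_of_approx_fixed hT hlam0 (hmem h hh).1.le (hmem h hh).2
      (hsteps h hh).2 hw) z
  refine hbound.trans ?_
  rw [mul_comm _ ‖z - w‖]
  gcongr
  · exact hmax hs
  exact (norm_sub_le z w).trans (by linarith)

/-- Bound on a finite composition of the operators `D_λ^{h_i}`, where
`D_λ^h(x) = λ • T_h(((1-λh)/λ) • x)` and `T_h = (1-h) Id + h T`:
`‖D_λ^{h_1} ∘ ⋯ ∘ D_λ^{h_n}(z) - w_{λ/(1+λ)}‖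
  ≤ 2 ‖T 0‖ max_i h_i + (‖T 0‖ + ‖z‖) Π_i (1 - λ h_i)`. -/
theorem composed_discounted_operators_bound
    {Z : Type*} [NormedAddCommGroup Z] [NormedSpace ℝ Z] [CompleteSpace Z]
    (T : Z → Z) (hT : ∀ x y : Z, ‖T x - T y‖ ≤ ‖x - y‖)
    (lam : ℝ) (hlam : lam ∈ Set.Ioc (0 : ℝ) 1)
    (z : Z) (hs : List ℝ) (hne : hs ≠ [])
    (hmem : ∀ hi ∈ hs, hi ∈ Set.Ioc (0 : ℝ) 1)
    (Wm : Z) (hWm : T ((1 - lam / (1 + lam)) • Wm) = Wm) :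
    ‖hs.foldr (fun hi x => lam • ((1 - hi) • (((1 - lam * hi) / lam) • x)
        + hi • T (((1 - lam * hi) / lam) • x))) z
      - (lam / (1 + lam)) • Wm‖
      ≤ 2 * ‖T 0‖ * hs.foldr max 0
        + (‖T 0‖ + ‖z‖) * (hs.map (fun hi => 1 - lam * hi)).prod :=
  composed_discounted_operators_bound_general T hT lam hlam z hs hmem Wm hWm
end

section
/- For all λ, h ∈ (0,1], ‖D_λ^h(w_{λ/(1+λ)}) − w_{λ/(1+λ)}‖ ≤ 2·‖T(0)‖·λ·h². -/
/-!
Write `μ = λ/(1+λ)`, `w = μ W` and `u = ((1-λh)/λ) w`. Since `T((1-μ) W) = W` and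
`u - (1-μ) W = -h w`, nonexpansiveness gives `‖T u - W‖ ≤ |h| ‖w‖`. The defect splits as
`D_λ^h(w) - w = λh (T u - W) + λh² w`, and `‖w‖ ≤ ‖T 0‖` because `W` is the fixed point of a
`(1-μ)`-contraction whose value at `0` is `T 0`.
-/

section Nonexpansive

variable {Z : Type*} [NormedAddCommGroup Z] [NormedSpace ℝ Z]
  {T : Z → Z} (hT : ∀ x y : Z, ‖T x - T y‖ ≤ ‖x - y‖)
include hT

theorem norm_le_abs_mul_add_of_apply_smul_eq {c : ℝ} {W : Z} (hW : T (c • W) = W) :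
    ‖W‖ ≤ |c| * ‖W‖ + ‖T 0‖ :=
  calc ‖W‖ ≤ ‖T (c • W) - T 0‖ + ‖T 0‖ := by
        simpa only [hW] using norm_le_norm_sub_add W (T 0)
    _ ≤ ‖c • W - 0‖ + ‖T 0‖ := by gcongr; exact hT _ _
    _ = |c| * ‖W‖ + ‖T 0‖ := by rw [sub_zero, norm_smul, Real.norm_eq_abs]

theorem norm_smul_le_of_apply_one_sub_smul_eq {μ : ℝ} (hμ0 : 0 ≤ μ) (hμ1 : μ ≤ 1) {W : Z}
    (hW : T ((1 - μ) • W) = W) : ‖μ • W‖ ≤ ‖T 0‖ := by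
  have hW' := norm_le_abs_mul_add_of_apply_smul_eq hT hW
  rw [abs_of_nonneg (by linarith)] at hW'
  rw [norm_smul, Real.norm_eq_abs, abs_of_nonneg hμ0]
  linarith

end Nonexpansive

section Discount

variable {Z : Type*} [AddCommGroup Z] [Module ℝ Z] {lam : ℝ}

theorem discount_rescale_sub_eq (hlam : lam ≠ 0) (hlam' : 1 + lam ≠ 0) (h : ℝ) (W : Z) :
    ((1 - lam * h) / lam) • ((lam / (1 + lam)) • W) - (1 - lam / (1 + lam)) • W
      = (-h) • ((lam / (1 + lam)) • W) := by
  match_scalars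
  field_simp
  ring

theorem discount_defect_eq (hlam : lam ≠ 0) (hlam' : 1 + lam ≠ 0) (h : ℝ) (W z : Z) :
    lam • ((1 - h) • (((1 - lam * h) / lam) • ((lam / (1 + lam)) • W)) + h • z)
        - (lam / (1 + lam)) • W
      = (lam * h) • (z - W) + (lam * h ^ 2) • ((lam / (1 + lam)) • W) := by
  match_scalars
  · field_simp
    ring
  · ring

end Discount

theorem discounted_operator_near_fixed_point_general
    {Z : Type*} [NormedAddCommGroup Z] [NormedSpace ℝ Z]
    (T : Z → Z) (hT : ∀ x y : Z, ‖T x - T y‖ ≤ ‖x - y‖)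
    (lam h : ℝ) (hlam : lam ∈ Set.Ioc (0 : ℝ) 1)
    (Wm : Z) (hWm : T ((1 - lam / (1 + lam)) • Wm) = Wm) :
    ‖lam • ((1 - h) • (((1 - lam * h) / lam) • ((lam / (1 + lam)) • Wm))
        + h • T (((1 - lam * h) / lam) • ((lam / (1 + lam)) • Wm)))
      - (lam / (1 + lam)) • Wm‖ ≤ 2 * ‖T 0‖ * lam * h ^ 2 := by
  have hl0 : 0 < lam := hlam.1
  have hl1 : 0 < 1 + lam := by linarith
  set w := (lam / (1 + lam)) • Wm
  set u := ((1 - lam * h) / lam) • w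
  have hw : ‖w‖ ≤ ‖T 0‖ :=
    norm_smul_le_of_apply_one_sub_smul_eq hT (by positivity)
      ((div_le_one hl1).2 (by linarith)) hWm
  have hTu : ‖T u - Wm‖ ≤ |h| * ‖w‖ := by
    calc ‖T u - Wm‖ = ‖T u - T ((1 - lam / (1 + lam)) • Wm)‖ := by rw [hWm]
      _ ≤ ‖u - (1 - lam / (1 + lam)) • Wm‖ := hT _ _
      _ = |h| * ‖w‖ := by
        rw [discount_rescale_sub_eq hl0.ne' hl1.ne', norm_smul, Real.norm_eq_abs, abs_neg]
  rw [discount_defect_eq hl0.ne' hl1.ne']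
  calc ‖(lam * h) • (T u - Wm) + (lam * h ^ 2) • w‖
      ≤ ‖(lam * h) • (T u - Wm)‖ + ‖(lam * h ^ 2) • w‖ := norm_add_le _ _
    _ = lam * |h| * ‖T u - Wm‖ + lam * |h| ^ 2 * ‖w‖ := by
        simp only [norm_smul, Real.norm_eq_abs, abs_mul, abs_pow, abs_of_pos hl0]
    _ ≤ lam * |h| * (|h| * ‖T 0‖) + lam * |h| ^ 2 * ‖T 0‖ := by
        gcongr
        exact hTu.trans (by gcongr)
    _ = 2 * ‖T 0‖ * lam * h ^ 2 := by rw [← sq_abs h]; ring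

/-- For `λ, h ∈ (0,1]`, with `w = w_{λ/(1+λ)}` the normalized fixed point of
`x ↦ T((1 - λ/(1+λ)) x)` and `D_λ^h(x) = λ • T_h(((1-λh)/λ) • x)`,
one has `‖D_λ^h(w) - w‖ ≤ 2 ‖T 0‖ λ h²`. -/
theorem discounted_operator_near_fixed_point
    {Z : Type*} [NormedAddCommGroup Z] [NormedSpace ℝ Z] [CompleteSpace Z]
    (T : Z → Z) (hT : ∀ x y : Z, ‖T x - T y‖ ≤ ‖x - y‖)
    (lam h : ℝ) (hlam : lam ∈ Set.Ioc (0 : ℝ) 1) (hh : h ∈ Set.Ioc (0 : ℝ) 1)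
    (Wm : Z) (hWm : T ((1 - lam / (1 + lam)) • Wm) = Wm) :
    ‖lam • ((1 - h) • (((1 - lam * h) / lam) • ((lam / (1 + lam)) • Wm))
        + h • T (((1 - lam * h) / lam) • ((lam / (1 + lam)) • Wm)))
      - (lam / (1 + lam)) • Wm‖ ≤ 2 * ‖T 0‖ * lam * h ^ 2 :=
  discounted_operator_near_fixed_point_general T hT lam h hlam Wm hWm
end

section
/- Let λ, h ∈ (0,1], let z ∈ Z, and let (h_i)_{i≥1} be a sequence in (0,1] with h_i ≤ h for all i and Σ_{i=1}^∞ h_i = +∞. Then limsup_{n→∞} ‖(D_λ^{h_1} ∘ D_λ^{h_2} ∘ ⋯ ∘ D_λ^{h_n})(z) − w_{λ/(1+λ)}‖ ≤ 2·‖T(0)‖·h; in particular every limit point L of this sequence of compositions satisfies ‖L − w_{λ/(1+λ)}‖ ≤ 2·‖T(0)‖·h. -/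
/-!
Each `D_λ^{hᵢ}` is a `(1 - λhᵢ)`-contraction. Writing `μ = λ/(1+λ)` and `w = μ W`, the fixed point
equation `T(W/(1+λ)) = W` gives `‖w‖ ≤ ‖T 0‖` and
`D_λ^{hᵢ}(w) - w = λhᵢ (T(W/(1+λ) - hᵢ w) - T(W/(1+λ))) + λhᵢ² w`, so `D_λ^{hᵢ}` moves `w` by at most
`2 ‖T 0‖ h · λhᵢ`. Hence `‖cₙ - w‖ ≤ Pₙ ‖z - w‖ + 2 ‖T 0‖ h (1 - Pₙ)` with
`Pₙ = ∏ (1 - λhᵢ) ≤ exp (-λ Σ hᵢ) → 0`.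
-/

open Filter Topology

section

variable {X : Type*} [PseudoMetricSpace X]

theorem dist_foldr_le {ι : Type*} (f : ι → X → X) (a : ι → ℝ) (w : X) (C : ℝ) (x : X) :
    ∀ l : List ι, (∀ i ∈ l, a i ≤ 1) →
      (∀ i ∈ l, ∀ y, dist (f i y) w ≤ (1 - a i) * dist y w + C * a i) →
      dist (l.foldr f x) w ≤
        (l.map fun i => 1 - a i).prod * dist x w + C * (1 - (l.map fun i => 1 - a i).prod)
  | [], _, _ => by simp
  | i :: l, ha, hf => by
    set P := (l.map fun i => 1 - a i).prod
    have ih := dist_foldr_le f a w C x l (fun j hj => ha j (by simp [hj]))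
      (fun j hj => hf j (by simp [hj]))
    calc dist (f i (l.foldr f x)) w
        ≤ (1 - a i) * dist (l.foldr f x) w + C * a i := hf i (by simp) _
      _ ≤ (1 - a i) * (P * dist x w + C * (1 - P)) + C * a i := by
          gcongr
          linarith [ha i (by simp)]
      _ = (1 - a i) * P * dist x w + C * (1 - (1 - a i) * P) := by ring
      _ = _ := by simp [P]

theorem limsup_dist_le_and_dist_le_of_mapClusterPt {α : Type*} {l : Filter α} [l.NeBot]
    {u : α → X} {w : X} {b : α → ℝ} {C : ℝ} (hub : ∀ n, dist (u n) w ≤ b n)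
    (hb : Tendsto b l (𝓝 C)) :
    limsup (fun n => dist (u n) w) l ≤ C ∧ ∀ L, MapClusterPt L l u → dist L w ≤ C := by
  have hlimsup : limsup (fun n => dist (u n) w) l ≤ C :=
    (limsup_le_limsup (Eventually.of_forall hub)
      (isCoboundedUnder_le_of_le l fun _ => dist_nonneg) hb.isBoundedUnder_le).trans_eq
      hb.limsup_eq
  refine ⟨hlimsup, fun L hL => le_trans ?_ hlimsup⟩
  exact (hL.continuousAt_comp (continuous_id.dist continuous_const).continuousAt).le_limsup
    (hb.isBoundedUnder_le.mono_le (Eventually.of_forall hub))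

end

theorem tendsto_prod_one_sub_of_tendsto_sum {a : ℕ → ℝ} (ha : ∀ i, a i ≤ 1)
    (hsum : Tendsto (fun n => ∑ i ∈ Finset.range n, a i) atTop atTop) :
    Tendsto (fun n => ∏ i ∈ Finset.range n, (1 - a i)) atTop (𝓝 0) := by
  have hfac : ∀ i, 0 ≤ 1 - a i := fun i => sub_nonneg.2 (ha i)
  refine squeeze_zero (fun n => Finset.prod_nonneg fun i _ => hfac i) (fun n => ?_)
    (Real.tendsto_exp_atBot.comp (tendsto_neg_atTop_atBot.comp hsum))
  calc ∏ i ∈ Finset.range n, (1 - a i)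
      ≤ ∏ i ∈ Finset.range n, Real.exp (-a i) :=
        Finset.prod_le_prod (fun i _ => hfac i) fun i _ => by
          linarith [Real.add_one_le_exp (-a i)]
    _ = Real.exp (-∑ i ∈ Finset.range n, a i) := by
        rw [← Real.exp_sum, Finset.sum_neg_distrib]

section

variable {Z : Type*} [NormedAddCommGroup Z] [NormedSpace ℝ Z] {T : Z → Z}

def averagedMap (T : Z → Z) (h : ℝ) (x : Z) : Z := (1 - h) • x + h • T x

noncomputable def discountedMap (T : Z → Z) (lam h : ℝ) (x : Z) : Z :=
  lam • averagedMap T h (((1 - lam * h) / lam) • x)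

theorem norm_averagedMap_sub_le (hT : ∀ x y : Z, ‖T x - T y‖ ≤ ‖x - y‖) {h : ℝ} (h0 : 0 ≤ h)
    (h1 : h ≤ 1) (x y : Z) : ‖averagedMap T h x - averagedMap T h y‖ ≤ ‖x - y‖ := by
  have hid : averagedMap T h x - averagedMap T h y = (1 - h) • (x - y) + h • (T x - T y) := by
    simp only [averagedMap]
    module
  calc ‖averagedMap T h x - averagedMap T h y‖
      ≤ (1 - h) * ‖x - y‖ + h * ‖T x - T y‖ := by
        rw [hid, ← norm_smul_of_nonneg (sub_nonneg.2 h1), ← norm_smul_of_nonneg h0]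
        exact norm_add_le _ _
    _ ≤ (1 - h) * ‖x - y‖ + h * ‖x - y‖ := by gcongr; exact hT x y
    _ = ‖x - y‖ := by ring

theorem norm_discountedMap_sub_le (hT : ∀ x y : Z, ‖T x - T y‖ ≤ ‖x - y‖) {lam h : ℝ}
    (hlam : 0 < lam) (h0 : 0 ≤ h) (h1 : h ≤ 1) (hlh : lam * h ≤ 1) (x y : Z) :
    ‖discountedMap T lam h x - discountedMap T lam h y‖ ≤ (1 - lam * h) * ‖x - y‖ := by
  set s := (1 - lam * h) / lam
  have hs : 0 ≤ s := div_nonneg (sub_nonneg.2 hlh) hlam.le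
  calc ‖discountedMap T lam h x - discountedMap T lam h y‖
      = lam * ‖averagedMap T h (s • x) - averagedMap T h (s • y)‖ := by
        rw [discountedMap, discountedMap, ← smul_sub, norm_smul_of_nonneg hlam.le]
    _ ≤ lam * ‖s • x - s • y‖ := by gcongr; exact norm_averagedMap_sub_le hT h0 h1 _ _
    _ = (1 - lam * h) * ‖x - y‖ := by
        rw [← smul_sub, norm_smul_of_nonneg hs, ← mul_assoc, mul_div_cancel₀ _ hlam.ne']

theorem norm_smul_le_of_map_one_sub_smul_eq (hT : ∀ x y : Z, ‖T x - T y‖ ≤ ‖x - y‖) {μ : ℝ}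
    (hμ0 : 0 ≤ μ) (hμ1 : μ ≤ 1) {W : Z} (hW : T ((1 - μ) • W) = W) : ‖μ • W‖ ≤ ‖T 0‖ := by
  have hdist : ‖W - T 0‖ ≤ (1 - μ) * ‖W‖ := by
    simpa [hW, norm_smul_of_nonneg (sub_nonneg.2 hμ1)] using hT ((1 - μ) • W) 0
  rw [norm_smul_of_nonneg hμ0]
  linarith [norm_sub_norm_le W (T 0)]

theorem norm_discountedMap_sub_self_le (hT : ∀ x y : Z, ‖T x - T y‖ ≤ ‖x - y‖) {lam h : ℝ}
    (hlam : 0 < lam) (h0 : 0 ≤ h) {W : Z} (hW : T ((1 - lam / (1 + lam)) • W) = W) :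
    ‖discountedMap T lam h ((lam / (1 + lam)) • W) - (lam / (1 + lam)) • W‖ ≤
      2 * (lam * h ^ 2) * ‖(lam / (1 + lam)) • W‖ := by
  set w := (lam / (1 + lam)) • W
  set v := (1 - lam / (1 + lam)) • W
  have hlam' : 1 + lam ≠ 0 := by positivity
  have harg : ((1 - lam * h) / lam) • w = v - h • w := by
    simp only [w, v, smul_smul, ← sub_smul]
    congr 1
    field_simp
    ring
  have hid : discountedMap T lam h w - w = (lam * h) • (T (v - h • w) - T v) + (lam * h * h) • w := by
    rw [discountedMap, averagedMap, harg, hW]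
    generalize T (v - h • w) = u
    simp only [w, v]
    match_scalars
    all_goals field_simp
    ring
  have hT' : ‖T (v - h • w) - T v‖ ≤ h * ‖w‖ := by
    simpa [norm_smul_of_nonneg h0] using hT (v - h • w) v
  calc ‖discountedMap T lam h w - w‖
      ≤ (lam * h) * ‖T (v - h • w) - T v‖ + (lam * h * h) * ‖w‖ := by
        rw [hid, ← norm_smul_of_nonneg (by positivity), ← norm_smul_of_nonneg (by positivity)]
        exact norm_add_le _ _
    _ ≤ (lam * h) * (h * ‖w‖) + (lam * h * h) * ‖w‖ := by gcongr
    _ = 2 * (lam * h ^ 2) * ‖w‖ := by ring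

theorem norm_discountedMap_sub_le_of_fixedPoint (hT : ∀ x y : Z, ‖T x - T y‖ ≤ ‖x - y‖)
    {lam h hi : ℝ} (hlam0 : 0 < lam) (hlam1 : lam ≤ 1) (hi0 : 0 ≤ hi) (hi1 : hi ≤ 1)
    (hih : hi ≤ h) {W : Z} (hW : T ((1 - lam / (1 + lam)) • W) = W) (x : Z) :
    ‖discountedMap T lam hi x - (lam / (1 + lam)) • W‖ ≤
      (1 - lam * hi) * ‖x - (lam / (1 + lam)) • W‖ + 2 * ‖T 0‖ * h * (lam * hi) := by
  set w := (lam / (1 + lam)) • W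
  have hw : ‖w‖ ≤ ‖T 0‖ :=
    norm_smul_le_of_map_one_sub_smul_eq hT (by positivity)
      ((div_le_one (by positivity)).2 (by linarith)) hW
  calc ‖discountedMap T lam hi x - w‖
      ≤ ‖discountedMap T lam hi x - discountedMap T lam hi w‖ + ‖discountedMap T lam hi w - w‖ :=
        norm_sub_le_norm_sub_add_norm_sub _ _ _
    _ ≤ (1 - lam * hi) * ‖x - w‖ + 2 * (lam * hi ^ 2) * ‖w‖ :=
        add_le_add (norm_discountedMap_sub_le hT hlam0 hi0 hi1 (by nlinarith) x w)
          (norm_discountedMap_sub_self_le hT hlam0 hi0 hW)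
    _ = (1 - lam * hi) * ‖x - w‖ + 2 * (‖w‖ * hi) * (lam * hi) := by ring
    _ ≤ (1 - lam * hi) * ‖x - w‖ + 2 * (‖T 0‖ * h) * (lam * hi) := by gcongr
    _ = _ := by ring

end

theorem composed_discounted_operators_limsup_general
    {Z : Type*} [NormedAddCommGroup Z] [NormedSpace ℝ Z]
    (T : Z → Z) (hT : ∀ x y : Z, ‖T x - T y‖ ≤ ‖x - y‖)
    (lam h : ℝ) (hlam : lam ∈ Set.Ioc (0 : ℝ) 1)
    (z : Z) (hs : ℕ → ℝ)
    (hmem : ∀ i : ℕ, 1 ≤ i → hs i ∈ Set.Ioc (0 : ℝ) 1)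
    (hle : ∀ i : ℕ, 1 ≤ i → hs i ≤ h)
    (hdiv : Filter.Tendsto (fun n : ℕ => ∑ i ∈ Finset.range n, hs (i + 1))
      Filter.atTop Filter.atTop)
    (Wm : Z) (hWm : T ((1 - lam / (1 + lam)) • Wm) = Wm) :
    (Filter.limsup
        (fun n : ℕ =>
          ‖((List.range n).map (fun i => hs (i + 1))).foldr
              (fun hi x => lam • ((1 - hi) • (((1 - lam * hi) / lam) • x)
                + hi • T (((1 - lam * hi) / lam) • x))) z
            - (lam / (1 + lam)) • Wm‖)
        Filter.atTop ≤ 2 * ‖T 0‖ * h) ∧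
    (∀ L : Z, MapClusterPt L Filter.atTop
        (fun n : ℕ =>
          ((List.range n).map (fun i => hs (i + 1))).foldr
            (fun hi x => lam • ((1 - hi) • (((1 - lam * hi) / lam) • x)
              + hi • T (((1 - lam * hi) / lam) • x))) z) →
      ‖L - (lam / (1 + lam)) • Wm‖ ≤ 2 * ‖T 0‖ * h) := by
  obtain ⟨hlam0, hlam1⟩ := hlam
  set w := (lam / (1 + lam)) • Wm
  set C := 2 * ‖T 0‖ * h
  set P := fun n => ∏ i ∈ Finset.range n, (1 - lam * hs (i + 1))
  have hbound : ∀ n, dist (((List.range n).map fun i => hs (i + 1)).foldr (discountedMap T lam) z)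
      w ≤ P n * dist z w + C * (1 - P n) := fun n => by
    have hP_list : P n = (((List.range n).map fun i => hs (i + 1)).map (1 - lam * ·)).prod := by
      rw [List.map_map]
      rfl
    rw [hP_list]
    refine dist_foldr_le _ (lam * ·) w C z _ (fun hi hi_mem => ?_) (fun hi hi_mem x => ?_)
    all_goals obtain ⟨i, -, rfl⟩ := List.mem_map.1 hi_mem
    all_goals obtain ⟨hi0, hi1⟩ := hmem (i + 1) (by omega)
    · nlinarith
    · simpa only [dist_eq_norm] using norm_discountedMap_sub_le_of_fixedPoint hT hlam0 hlam1
        hi0.le hi1 (hle (i + 1) (by omega)) hWm x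
  have hP : Tendsto P atTop (𝓝 0) :=
    tendsto_prod_one_sub_of_tendsto_sum
      (fun i => by obtain ⟨hi0, hi1⟩ := hmem (i + 1) (by omega); nlinarith)
      (by simpa only [Finset.mul_sum] using hdiv.const_mul_atTop hlam0)
  have hlim : Tendsto (fun n => P n * dist z w + C * (1 - P n)) atTop (𝓝 C) := by
    simpa using (hP.mul_const _).add ((hP.const_sub 1).const_mul C)
  have key := limsup_dist_le_and_dist_le_of_mapClusterPt hbound hlim
  simp only [dist_eq_norm] at key
  exact key

/-- For a sequence of step sizes `h_i ∈ (0,1]` with `h_i ≤ h` and `Σ h_i = ∞`,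
the compositions `c n = D_λ^{h_1} ∘ ⋯ ∘ D_λ^{h_n}(z)` (with
`D_λ^h(x) = λ • T_h(((1-λh)/λ) • x)`, `T_h = (1-h) Id + h T`) satisfy
`limsup_n ‖c n - w_{λ/(1+λ)}‖ ≤ 2 ‖T 0‖ h`; in particular every cluster point
`L` of `(c n)` satisfies `‖L - w_{λ/(1+λ)}‖ ≤ 2 ‖T 0‖ h`. -/
theorem composed_discounted_operators_limsup
    {Z : Type*} [NormedAddCommGroup Z] [NormedSpace ℝ Z] [CompleteSpace Z]
    (T : Z → Z) (hT : ∀ x y : Z, ‖T x - T y‖ ≤ ‖x - y‖)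
    (lam h : ℝ) (hlam : lam ∈ Set.Ioc (0 : ℝ) 1) (hh : h ∈ Set.Ioc (0 : ℝ) 1)
    (z : Z) (hs : ℕ → ℝ)
    (hmem : ∀ i : ℕ, 1 ≤ i → hs i ∈ Set.Ioc (0 : ℝ) 1)
    (hle : ∀ i : ℕ, 1 ≤ i → hs i ≤ h)
    (hdiv : Filter.Tendsto (fun n : ℕ => ∑ i ∈ Finset.range n, hs (i + 1))
      Filter.atTop Filter.atTop)
    (Wm : Z) (hWm : T ((1 - lam / (1 + lam)) • Wm) = Wm) :
    (Filter.limsup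
        (fun n : ℕ =>
          ‖((List.range n).map (fun i => hs (i + 1))).foldr
              (fun hi x => lam • ((1 - hi) • (((1 - lam * hi) / lam) • x)
                + hi • T (((1 - lam * hi) / lam) • x))) z
            - (lam / (1 + lam)) • Wm‖)
        Filter.atTop ≤ 2 * ‖T 0‖ * h) ∧
    (∀ L : Z, MapClusterPt L Filter.atTop
        (fun n : ℕ =>
          ((List.range n).map (fun i => hs (i + 1))).foldr
            (fun hi x => lam • ((1 - hi) • (((1 - lam * hi) / lam) • x)
              + hi • T (((1 - lam * hi) / lam) • x))) z) →
      ‖L - (lam / (1 + lam)) • Wm‖ ≤ 2 * ‖T 0‖ * h) :=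
  composed_discounted_operators_limsup_general T hT lam h hlam z hs hmem hle hdiv Wm hWm
end

section
/- For all λ, h ∈ (0,1], ‖w_λ^h − w_λ‖ ≤ 2·‖T(0)‖·λ. -/
/-!
With `α = 1 + λ(1 - h)`, the averaged fixed point equation for `W_λ^h` says exactly that
`α W_λ^h` is the plain discounted fixed point for the discount `λ' = λ / α`, so that
`w_λ^h = w_λ'`. The theorem then follows from the Lipschitz-type estimate
`‖w_λ - w_μ‖ ≤ 2 |λ - μ| ‖W_μ‖` and the a priori bound `μ ‖W_μ‖ ≤ ‖T 0‖`,
both obtained by comparing the fixed point equations through nonexpansiveness.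
-/

section DiscountedFixedPoint

variable {Z : Type*} [NormedAddCommGroup Z] [NormedSpace ℝ Z] {T : Z → Z}

theorem mul_norm_le_of_discounted_fixed (hT : ∀ x y : Z, ‖T x - T y‖ ≤ ‖x - y‖)
    {μ : ℝ} (hμ : μ ≤ 1) {W : Z} (hW : T ((1 - μ) • W) = W) :
    μ * ‖W‖ ≤ ‖T 0‖ := by
  have hW_le : ‖W‖ ≤ (1 - μ) * ‖W‖ + ‖T 0‖ :=
    calc ‖W‖ = ‖(T ((1 - μ) • W) - T 0) + T 0‖ := by rw [hW, sub_add_cancel]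
      _ ≤ ‖T ((1 - μ) • W) - T 0‖ + ‖T 0‖ := norm_add_le _ _
      _ ≤ ‖(1 - μ) • W - 0‖ + ‖T 0‖ := by gcongr; exact hT _ _
      _ = (1 - μ) * ‖W‖ + ‖T 0‖ := by
        rw [sub_zero, norm_smul, Real.norm_of_nonneg (by linarith)]
  linarith

theorem norm_smul_sub_smul_le_of_discounted_fixed
    (hT : ∀ x y : Z, ‖T x - T y‖ ≤ ‖x - y‖)
    {ν μ : ℝ} (hν₀ : 0 ≤ ν) (hν₁ : ν ≤ 1) {V W : Z}
    (hV : T ((1 - ν) • V) = V) (hW : T ((1 - μ) • W) = W) :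
    ‖ν • V - μ • W‖ ≤ 2 * |ν - μ| * ‖W‖ := by
  have hVW : ν * ‖V - W‖ ≤ |ν - μ| * ‖W‖ := by
    have : ‖V - W‖ ≤ (1 - ν) * ‖V - W‖ + |ν - μ| * ‖W‖ :=
      calc ‖V - W‖ ≤ ‖(1 - ν) • V - (1 - μ) • W‖ := by
            simpa only [hV, hW] using hT ((1 - ν) • V) ((1 - μ) • W)
        _ = ‖(1 - ν) • (V - W) - (ν - μ) • W‖ := by congr 1; module
        _ ≤ ‖(1 - ν) • (V - W)‖ + ‖(ν - μ) • W‖ := norm_sub_le _ _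
        _ = (1 - ν) * ‖V - W‖ + |ν - μ| * ‖W‖ := by
            rw [norm_smul, norm_smul, Real.norm_of_nonneg (by linarith), Real.norm_eq_abs]
    linarith
  calc ‖ν • V - μ • W‖ = ‖ν • (V - W) + (ν - μ) • W‖ := by congr 1; module
    _ ≤ ‖ν • (V - W)‖ + ‖(ν - μ) • W‖ := norm_add_le _ _
    _ = ν * ‖V - W‖ + |ν - μ| * ‖W‖ := by
        rw [norm_smul, norm_smul, Real.norm_of_nonneg hν₀, Real.norm_eq_abs]
    _ ≤ 2 * |ν - μ| * ‖W‖ := by linarith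

theorem discounted_fixed_of_averaged_fixed {lam h : ℝ} (hh : h ≠ 0)
    (hα : 1 + lam * (1 - h) ≠ 0) {W : Z}
    (hW : (1 - h) • ((1 - lam * h) • W) + h • T ((1 - lam * h) • W) = W) :
    T ((1 - lam / (1 + lam * (1 - h))) • ((1 + lam * (1 - h)) • W))
      = (1 + lam * (1 - h)) • W := by
  have hscale :
      (1 - lam / (1 + lam * (1 - h))) • ((1 + lam * (1 - h)) • W) = (1 - lam * h) • W := by
    rw [smul_smul, sub_mul, div_mul_cancel₀ _ hα]
    congr 1
    ring
  rw [hscale]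
  apply smul_right_injective Z hh
  calc h • T ((1 - lam * h) • W) = W - (1 - h) • ((1 - lam * h) • W) :=
        eq_sub_iff_add_eq'.2 hW
    _ = h • ((1 + lam * (1 - h)) • W) := by module

end DiscountedFixedPoint

theorem discounted_value_asymptotic_general
    {Z : Type*} [NormedAddCommGroup Z] [NormedSpace ℝ Z]
    (T : Z → Z) (hT : ∀ x y : Z, ‖T x - T y‖ ≤ ‖x - y‖)
    (lam h : ℝ) (hlam : lam ∈ Set.Ioc (0 : ℝ) 1) (hh : h ∈ Set.Ioc (0 : ℝ) 1)
    (Wlh : Z)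
    (hWlh : (1 - h) • ((1 - lam * h) • Wlh) + h • T ((1 - lam * h) • Wlh) = Wlh)
    (Wl : Z) (hWl : T ((1 - lam) • Wl) = Wl) :
    ‖lam • Wlh - lam • Wl‖ ≤ 2 * ‖T 0‖ * lam := by
  obtain ⟨hlam₀, hlam₁⟩ := hlam
  obtain ⟨hh₀, hh₁⟩ := hh
  set α := 1 + lam * (1 - h)
  have hα : 1 ≤ α := by nlinarith
  have hα₀ : 0 < α := by linarith
  have hY := discounted_fixed_of_averaged_fixed hh₀.ne' hα₀.ne' hWlh
  have hlam_div : 0 ≤ lam / α ∧ lam / α ≤ 1 :=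
    ⟨by positivity, (div_le_one hα₀).2 (by linarith)⟩
  have hgap : |lam / α - lam| = (1 - 1 / α) * lam := by
    rw [abs_sub_comm, abs_of_nonneg (sub_nonneg.2 (div_le_self hlam₀.le hα))]
    ring
  have hgap_le : 1 - 1 / α ≤ lam := by
    rw [sub_le_comm, le_div_iff₀ hα₀]
    nlinarith
  calc ‖lam • Wlh - lam • Wl‖ = ‖(lam / α) • (α • Wlh) - lam • Wl‖ := by
        rw [smul_smul, div_mul_cancel₀ _ hα₀.ne']
    _ ≤ 2 * |lam / α - lam| * ‖Wl‖ :=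
        norm_smul_sub_smul_le_of_discounted_fixed hT hlam_div.1 hlam_div.2 hY hWl
    _ = 2 * (1 - 1 / α) * (lam * ‖Wl‖) := by rw [hgap]; ring
    _ ≤ 2 * lam * ‖T 0‖ := by
        gcongr
        exact mul_norm_le_of_discounted_fixed hT hlam₁ hWl
    _ = 2 * ‖T 0‖ * lam := by ring

/-- For `λ, h ∈ (0,1]`, `‖w_λ^h - w_λ‖ ≤ 2 ‖T 0‖ λ`, where `W_λ^h` is the fixed
point of `u ↦ T_h((1 - λ h) u)` with `T_h = (1-h) Id + h T`, `w_λ^h = λ • W_λ^h`,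
and `W_λ` is the fixed point of `x ↦ T((1 - λ) x)`, `w_λ = λ • W_λ`. -/
theorem discounted_value_asymptotic
    {Z : Type*} [NormedAddCommGroup Z] [NormedSpace ℝ Z] [CompleteSpace Z]
    (T : Z → Z) (hT : ∀ x y : Z, ‖T x - T y‖ ≤ ‖x - y‖)
    (lam h : ℝ) (hlam : lam ∈ Set.Ioc (0 : ℝ) 1) (hh : h ∈ Set.Ioc (0 : ℝ) 1)
    (Wlh : Z)
    (hWlh : (1 - h) • ((1 - lam * h) • Wlh) + h • T ((1 - lam * h) • Wlh) = Wlh)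
    (Wl : Z) (hWl : T ((1 - lam) • Wl) = Wl) :
    ‖lam • Wlh - lam • Wl‖ ≤ 2 * ‖T 0‖ * lam :=
  discounted_value_asymptotic_general T hT lam h hlam hh Wlh hWlh Wl hWl
end
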